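/- arXiv:2511.09810 — 8 statements merged into one kernel-verified Lean document; each statement's English description precedes it below -/
import Mathlib

section
/- Along any solution of the overparameterized gradient flow, all the invariants are conserved: for every i between 1 and N−1, the matrix C_i(t) := W_i(t) W_i(t)ᵀ − W_{i+1}(t)ᵀ W_{i+1}(t) is constant in t, i.e. C_i(t) = C_i(0) for all t ≥ 0 in the interval of existence of the solution. -/
open Matrix

noncomputable section

abbrev Mat (a b : ℕ) : Type := Matrix (Fin a) (Fin b) ℝ

/-- Frobenius inner product. -/
def frobInner {a b : ℕ} (A B : Mat a b) : ℝ := ∑ i, ∑ j, A i j * B i j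

/-- Frobenius norm. -/
def frobNorm {a b : ℕ} (A : Mat a b) : ℝ := Real.sqrt (frobInner A A)

/-- Cast the row dimension of a matrix along an equality of natural numbers. -/
def mcast {a b c : ℕ} (h : a = b) (A : Mat a c) : Mat b c :=
  A.submatrix (Fin.cast h.symm) id

/-- Product of the layers `a, a+1, …, a+m-1`, i.e. `W_{a+m-1} ⋯ W_{a+1} W_a`. -/
def layerProd {d : ℕ → ℕ} (W : (i : ℕ) → Mat (d (i + 1)) (d i)) (a : ℕ) :
    (m : ℕ) → Mat (d (a + m)) (d a)
  | 0 => (1 : Mat (d a) (d a))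
  | m + 1 => W (a + m) * layerProd W a m

/-- The end-to-end product `𝐖(W) = W_{N-1} ⋯ W_0` (layers `0,…,N-1`). -/
def fullProd {d : ℕ → ℕ} (N : ℕ) (W : (i : ℕ) → Mat (d (i + 1)) (d i)) :
    Mat (d N) (d 0) :=
  mcast (congrArg d (Nat.zero_add N)) (layerProd W 0 N)

/-- The partial gradient `∇_{W_i} g(W) = (W_{N-1} ⋯ W_{i+1})ᵀ ∇f(𝐖(W)) (W_{i-1} ⋯ W_0)ᵀ`
(`0`-indexed layer `i < N`). -/
def gradTerm {d : ℕ → ℕ} (N : ℕ) (gradf : Mat (d N) (d 0) → Mat (d N) (d 0))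
    (W : (i : ℕ) → Mat (d (i + 1)) (d i)) (i : ℕ) (hi : i < N) :
    Mat (d (i + 1)) (d i) :=
  (mcast (congrArg d (by omega : i + 1 + (N - (i + 1)) = N))
      (layerProd W (i + 1) (N - (i + 1))))ᵀ *
    gradf (fullProd N W) *
    (mcast (congrArg d (Nat.zero_add i)) (layerProd W 0 i))ᵀ

/-- The overparameterized gradient flow equations at time `t`:
`Ẇ_i = −(W_{N-1} ⋯ W_{i+1})ᵀ ∇f(𝐖(W)) (W_{i-1} ⋯ W_0)ᵀ` for every layer `i < N`,
stated entrywise. -/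
def IsOvpFlowAt {d : ℕ → ℕ} (N : ℕ) (gradf : Mat (d N) (d 0) → Mat (d N) (d 0))
    (W : ℝ → (i : ℕ) → Mat (d (i + 1)) (d i)) (t : ℝ) : Prop :=
  ∀ (i : Fin N) (a : Fin (d (i.val + 1))) (b : Fin (d i.val)),
    HasDerivAt (fun s => W s i.val a b)
      (-(gradTerm N gradf (W t) i.val i.isLt) a b) t

/-- `gradf` is the gradient of `f` with respect to the Frobenius inner product,
expressed through directional (Gateaux) derivatives. -/
def IsGradientOf {a b : ℕ} (f : Mat a b → ℝ) (gradf : Mat a b → Mat a b) : Prop :=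
  ∀ X H : Mat a b, HasDerivAt (fun s : ℝ => f (X + s • H)) (frobInner (gradf X) H) 0

/-!
Write `Ẇ_i = -G_i` and `𝐖 = P W_{i+1} W_i Q` with `P = W_{N-1} ⋯ W_{i+2}`, `Q = W_{i-1} ⋯ W_0`.
Then `G_i = (P W_{i+1})ᵀ ∇f(𝐖) Qᵀ` and `G_{i+1} = Pᵀ ∇f(𝐖) (W_i Q)ᵀ`, so both `G_i W_iᵀ` and
`W_{i+1}ᵀ G_{i+1}` equal `W_{i+1}ᵀ Pᵀ ∇f(𝐖) Qᵀ W_iᵀ`. Calling this matrix `M`, the derivative of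
`W_i W_iᵀ - W_{i+1}ᵀ W_{i+1}` is `-(M + Mᵀ) + (M + Mᵀ) = 0`.
-/

open Set

section LayerProducts

variable {d : ℕ → ℕ}

@[simp]
lemma mcast_self {a c : ℕ} (h : a = a) (A : Mat a c) : mcast h A = A := by
  ext p q; rfl

lemma mcast_mcast {a b b' c : ℕ} (h : a = b) (h' : b = b') (A : Mat a c) :
    mcast h' (mcast h A) = mcast (h.trans h') A := by
  ext p q; rfl

lemma mcast_mul {a b c e : ℕ} (h : a = b) (A : Mat a c) (B : Mat c e) :
    mcast h (A * B) = mcast h A * B := by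
  ext p q; rfl

lemma mul_mcast_of_eq (V : (i : ℕ) → Mat (d (i + 1)) (d i)) {j j' c : ℕ} (e : j = j')
    (h : d j = d j') (h' : d (j + 1) = d (j' + 1)) (X : Mat (d j) c) :
    V j' * mcast h X = mcast h' (V j * X) := by
  subst e; simp

lemma mcast_layerProd_congr (V : (i : ℕ) → Mat (d (i + 1)) (d i)) (a : ℕ) {m m' b : ℕ}
    (e : m = m') (h : d (a + m) = b) (h' : d (a + m') = b) :
    mcast h (layerProd V a m) = mcast h' (layerProd V a m') := by
  subst e; rfl

lemma layerProd_succ_eq_mcast_mul (V : (i : ℕ) → Mat (d (i + 1)) (d i)) (a m : ℕ) :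
    layerProd V a (m + 1) =
      mcast (congrArg d (by omega)) (layerProd V (a + 1) m) * V a := by
  induction m with
  | zero => simp [layerProd]
  | succ m ih =>
    rw [layerProd, ih, ← Matrix.mul_assoc, layerProd,
      mul_mcast_of_eq V (by omega : a + 1 + m = a + (m + 1))]

lemma mcast_layerProd_zero_succ (V : (i : ℕ) → Mat (d (i + 1)) (d i)) (i : ℕ) :
    mcast (congrArg d (Nat.zero_add (i + 1))) (layerProd V 0 (i + 1)) =
      V i * mcast (congrArg d (Nat.zero_add i)) (layerProd V 0 i) :=
  (mul_mcast_of_eq V (Nat.zero_add i) _ _ _).symm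

lemma mcast_layerProd_succ_sub {N : ℕ} (V : (i : ℕ) → Mat (d (i + 1)) (d i)) {i : ℕ}
    (h : i + 1 < N) :
    mcast (congrArg d (by omega : i + 1 + (N - (i + 1)) = N))
        (layerProd V (i + 1) (N - (i + 1))) =
      mcast (congrArg d (by omega : i + 1 + 1 + (N - (i + 1 + 1)) = N))
          (layerProd V (i + 2) (N - (i + 2))) * V (i + 1) := by
  rw [mcast_layerProd_congr V (i + 1) (by omega : N - (i + 1) = N - (i + 2) + 1)
      (h' := congrArg d (by omega)), layerProd_succ_eq_mcast_mul, mcast_mul, mcast_mcast]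

end LayerProducts

lemma gradTerm_mul_transpose {d : ℕ → ℕ} {N : ℕ} (gradf : Mat (d N) (d 0) → Mat (d N) (d 0))
    (V : (i : ℕ) → Mat (d (i + 1)) (d i)) {i : ℕ} (h₁ : i < N) (h₂ : i + 1 < N) :
    gradTerm N gradf V i h₁ * (V i)ᵀ = (V (i + 1))ᵀ * gradTerm N gradf V (i + 1) h₂ := by
  unfold gradTerm
  rw [mcast_layerProd_succ_sub V h₂, mcast_layerProd_zero_succ V i, transpose_mul, transpose_mul]
  simp only [Matrix.mul_assoc]

section Conservation

variable {l m n : Type*}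

lemma hasDerivAt_matrix_mul_apply [Fintype m] {A : ℝ → Matrix l m ℝ} {B : ℝ → Matrix m n ℝ}
    {A' : Matrix l m ℝ} {B' : Matrix m n ℝ} {x : ℝ}
    (hA : ∀ p q, HasDerivAt (fun s => A s p q) (A' p q) x)
    (hB : ∀ p q, HasDerivAt (fun s => B s p q) (B' p q) x) (p : l) (q : n) :
    HasDerivAt (fun s => (A s * B s) p q) ((A' * B x + A x * B') p q) x := by
  simp only [mul_apply, Matrix.add_apply, ← Finset.sum_add_distrib]
  exact HasDerivAt.fun_sum fun c _ => (hA p c).mul (hB c q)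

lemma mul_transpose_sub_transpose_mul_eq_of_hasDerivAt [Fintype l] [Fintype n]
    {A A' : ℝ → Matrix m n ℝ} {B B' : ℝ → Matrix l m ℝ} {a b : ℝ} (hab : a ≤ b)
    (hA : ∀ x ∈ Icc a b, ∀ p q, HasDerivAt (fun s => A s p q) (A' x p q) x)
    (hB : ∀ x ∈ Icc a b, ∀ p q, HasDerivAt (fun s => B s p q) (B' x p q) x)
    (hbal : ∀ x ∈ Icc a b, A' x * (A x)ᵀ = (B x)ᵀ * B' x) :
    A b * (A b)ᵀ - (B b)ᵀ * B b = A a * (A a)ᵀ - (B a)ᵀ * B a := by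
  ext p q
  have hderiv : ∀ x ∈ Icc a b,
      HasDerivAt (fun s => (A s * (A s)ᵀ - (B s)ᵀ * B s) p q) 0 x := by
    intro x hx
    have hAAt := hasDerivAt_matrix_mul_apply (B := fun s => (A s)ᵀ) (B' := (A' x)ᵀ)
      (hA x hx) (fun p q => hA x hx q p) p q
    have hBtB := hasDerivAt_matrix_mul_apply (A := fun s => (B s)ᵀ) (A' := (B' x)ᵀ)
      (fun p q => hB x hx q p) (hB x hx) p q
    have hbalT : A x * (A' x)ᵀ = (B' x)ᵀ * B x := by
      simpa using congrArg transpose (hbal x hx)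
    have hzero : (A' x * (A x)ᵀ + A x * (A' x)ᵀ) p q -
        ((B' x)ᵀ * B x + (B x)ᵀ * B' x) p q = 0 := by
      rw [hbal x hx, hbalT, add_comm, sub_self]
    have hsub := hAAt.sub hBtB
    rwa [hzero] at hsub
  exact constant_of_has_deriv_right_zero
    (fun x hx => (hderiv x hx).continuousAt.continuousWithinAt)
    (fun x hx => (hderiv x (Ico_subset_Icc_self hx)).hasDerivWithinAt) b (right_mem_Icc.2 hab)

end Conservation

theorem stmt0_general {N : ℕ}
    (d : ℕ → ℕ)
    (gradf : Mat (d N) (d 0) → Mat (d N) (d 0))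
    (T : EReal)
    (W : ℝ → (i : ℕ) → Mat (d (i + 1)) (d i))
    (hflow : ∀ t : ℝ, 0 ≤ t → (t : EReal) < T → IsOvpFlowAt N gradf W t) :
    ∀ i : ℕ, i < N - 1 → ∀ t : ℝ, 0 ≤ t → (t : EReal) < T →
      W t i * (W t i)ᵀ - (W t (i + 1))ᵀ * W t (i + 1) =
        W 0 i * (W 0 i)ᵀ - (W 0 (i + 1))ᵀ * W 0 (i + 1) := by
  intro i hi t ht htT
  have hflow' : ∀ x ∈ Icc 0 t, IsOvpFlowAt N gradf W x := fun x hx =>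
    hflow x hx.1 ((EReal.coe_le_coe_iff.2 hx.2).trans_lt htT)
  refine mul_transpose_sub_transpose_mul_eq_of_hasDerivAt ht
    (A := fun s => W s i) (B := fun s => W s (i + 1))
    (A' := fun x => -gradTerm N gradf (W x) i (by omega))
    (B' := fun x => -gradTerm N gradf (W x) (i + 1) (by omega))
    (fun x hx => hflow' x hx ⟨i, by omega⟩) (fun x hx => hflow' x hx ⟨i + 1, by omega⟩)
    fun x _ => ?_
  rw [Matrix.neg_mul, Matrix.mul_neg, gradTerm_mul_transpose]

/-- Along any solution of the overparameterized gradient flow, all the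
invariants are conserved: for every (1-indexed) layer index between `1` and `N-1`, here the
0-indexed `i` with `i + 1 ≤ N - 1 + 1 = N`, i.e. `i < N - 1`, the matrix
`C_i(t) = W_i(t) W_i(t)ᵀ − W_{i+1}(t)ᵀ W_{i+1}(t)` is constant on the interval of existence
`[0, T)` of the solution. -/
theorem stmt0 {n k N : ℕ} (hn : 1 ≤ n) (hk : n < k) (hN : 2 ≤ N)
    (d : ℕ → ℕ) (hd0 : d 0 = n) (hdN : d N = n) (hdmid : ∀ i, 0 < i → i < N → d i = k)
    (f : Mat (d N) (d 0) → ℝ) (gradf : Mat (d N) (d 0) → Mat (d N) (d 0))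
    (hgradf : IsGradientOf f gradf)
    (T : EReal) (hT : 0 < T)
    (W : ℝ → (i : ℕ) → Mat (d (i + 1)) (d i))
    (hflow : ∀ t : ℝ, 0 ≤ t → (t : EReal) < T → IsOvpFlowAt N gradf W t) :
    ∀ i : ℕ, i < N - 1 → ∀ t : ℝ, 0 ≤ t → (t : EReal) < T →
      W t i * (W t i)ᵀ - (W t (i + 1))ᵀ * W t (i + 1) =
        W 0 i * (W 0 i)ᵀ - (W 0 (i + 1))ᵀ * W 0 (i + 1) :=
  stmt0_general d gradf T W hflow
end
end

section
/- Suppose f : ℝ → ℝ is real analytic, bounded below with attained minimum value f_min, proper (every sublevel set is compact), f(0) > f_min, and there exists a positive-definite function α : [0,∞) → [0,∞) (α(0) = 0 and α(x) > 0 for x > 0) such that |f'(z)| ≥ α(f(z) − f_min) for all z ∈ ℝ; set s := sign(f'(0)). Then for any initialization (w_1⁰, w_2⁰), the solution of the vector overparameterized gradient flow satisfies lim_{t→∞} f(⟨w_2(t), w_1(t)⟩) = f_min if and only if ‖w_1⁰ − s w_2⁰‖ > 0. -/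
/-!
Write `x = ⟪w₂, w₁⟫`, `u = w₁ - s • w₂` and `v = w₁ + s • w₂`. Along the flow
`u' = s f'(x) u` and `v' = -s f'(x) v`, so `u` vanishes identically once `u(0) = 0`, and
`‖u‖ ‖v‖` is conserved; moreover `(f ∘ x)' = -f'(x)² (‖w₁‖² + ‖w₂‖²)`. The PL inequality makes
every critical point of `f` a global minimiser, hence `f ≥ f 0` on the side of `0` towards which
`f` increases at `0`.

If `u ≡ 0`, then `s x = ‖w₂‖² ≥ 0`, so `f (x t) ≥ f 0 > fmin`. If `u(0) ≠ 0`, then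
`‖w₁‖² + ‖w₂‖²` stays bounded below: by `‖u‖ ‖v‖` when `v(0) ≠ 0`, and when `v ≡ 0` because then
`s x = -‖w₂‖²` and `‖w₂‖²` grows whenever it is small enough for `s f'(x)` to be positive. Then
`f ∘ x` decreases at a definite rate while it stays above `fmin + ε`, since by properness `|f'|`
is bounded below on the corresponding sublevel band.
-/

open scoped RealInnerProductSpace

noncomputable section

abbrev EVec (k : ℕ) : Type := EuclideanSpace ℝ (Fin k)

/-- The vector overparameterized gradient flow equations
`ẇ₁ = −f'(⟪w₂, w₁⟫) w₂`, `ẇ₂ = −f'(⟪w₂, w₁⟫) w₁` at time `t`. -/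
def IsVecFlowAt {k : ℕ} (f : ℝ → ℝ) (w1 w2 : ℝ → EVec k) (t : ℝ) : Prop :=
  HasDerivAt w1 (-(deriv f ⟪w2 t, w1 t⟫) • w2 t) t ∧
  HasDerivAt w2 (-(deriv f ⟪w2 t, w1 t⟫) • w1 t) t

open Set Filter Topology

section ScalarODE

lemma le_add_mul_of_hasDerivAt_le {F F' : ℝ → ℝ} {C : ℝ}
    (hF : ∀ t, 0 ≤ t → HasDerivAt F (F' t) t) (hC : ∀ t, 0 ≤ t → F' t ≤ C)
    {s t : ℝ} (hs : 0 ≤ s) (hst : s ≤ t) : F t ≤ F s + C * (t - s) := by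
  refine image_le_of_deriv_right_le_deriv_boundary (f' := F')
    (B := fun r => F s + C * (r - s)) (B' := fun _ => C)
    (fun r hr => (hF r (hs.trans hr.1)).continuousAt.continuousWithinAt)
    (fun r hr => (hF r (hs.trans hr.1)).hasDerivWithinAt) (by simp) (by fun_prop)
    (fun r _ => ?_) (fun r hr => hC r (hs.trans hr.1)) ⟨hst, le_rfl⟩
  simpa using ((hasDerivAt_id r).sub_const s).const_mul C |>.const_add (F s) |>.hasDerivWithinAt

lemma antitoneOn_of_hasDerivAt_nonpos {F F' : ℝ → ℝ}
    (hF : ∀ t, 0 ≤ t → HasDerivAt F (F' t) t) (hF' : ∀ t, 0 ≤ t → F' t ≤ 0) :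
    AntitoneOn F (Ici 0) := fun s hs t _ hst => by
  simpa using le_add_mul_of_hasDerivAt_le hF hF' hs hst

lemma le_of_hasDerivAt_pos_of_eq {y y' : ℝ → ℝ} {m : ℝ}
    (hy : ∀ t, 0 ≤ t → HasDerivAt y (y' t) t) (h0 : m ≤ y 0)
    (hm : ∀ t, 0 ≤ t → y t = m → 0 < y' t) : ∀ t, 0 ≤ t → m ≤ y t := by
  intro T hT
  have := image_le_of_deriv_right_lt_deriv_boundary' (f := fun t => -y t) (f' := fun t => -y' t)
    (B := fun _ => -m) (B' := fun _ => 0)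
    (fun t ht => (hy t ht.1).neg.continuousAt.continuousWithinAt)
    (fun t ht => (hy t ht.1).neg.hasDerivWithinAt) (neg_le_neg h0) continuousOn_const
    (fun _ _ => hasDerivWithinAt_const _ _ _)
    (fun t ht heq => neg_neg_of_pos (hm t ht.1 (neg_inj.1 heq))) ⟨hT, le_rfl⟩
  exact neg_le_neg_iff.1 this

end ScalarODE

section VectorODE

variable {E : Type*} [NormedAddCommGroup E]

lemma eq_zero_of_hasDerivAt_smul_self [NormedSpace ℝ E] {z : ℝ → E} {g : ℝ → ℝ}
    (hg : ContinuousOn g (Ici 0)) (hz : ∀ t, 0 ≤ t → HasDerivAt z (g t • z t) t)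
    (h0 : z 0 = 0) : ∀ t, 0 ≤ t → z t = 0 := by
  intro T hT
  obtain ⟨K, hK⟩ := isCompact_Icc.exists_bound_of_continuousOn
    (hg.mono (Icc_subset_Ici_self : Icc 0 T ⊆ Ici 0))
  refine eq_zero_of_abs_deriv_le_mul_abs_self_of_eq_zero_right (K := K)
    (fun t ht => (hz t ht.1).continuousAt.continuousWithinAt)
    (fun t ht => (hz t ht.1).hasDerivWithinAt) h0 (fun t ht => ?_) T ⟨hT, le_rfl⟩
  rw [norm_smul]
  exact mul_le_mul_of_nonneg_right (hK t (Ico_subset_Icc_self ht)) (norm_nonneg _)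

variable [InnerProductSpace ℝ E]

lemma hasDerivAt_norm_sq_of_hasDerivAt_smul {z : ℝ → E} {c t : ℝ}
    (hz : HasDerivAt z (c • z t) t) : HasDerivAt (‖z ·‖ ^ 2) (2 * c * ‖z t‖ ^ 2) t := by
  convert hz.norm_sq using 1
  rw [real_inner_smul_right, real_inner_self_eq_norm_sq]
  ring

lemma norm_mul_norm_eq_of_hasDerivAt_smul {u v : ℝ → E} {g : ℝ → ℝ}
    (hu : ∀ t, 0 ≤ t → HasDerivAt u (g t • u t) t)
    (hv : ∀ t, 0 ≤ t → HasDerivAt v (-g t • v t) t) :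
    ∀ t, 0 ≤ t → ‖u t‖ * ‖v t‖ = ‖u 0‖ * ‖v 0‖ := by
  have hderiv : ∀ t, 0 ≤ t → HasDerivAt (fun t => ‖u t‖ ^ 2 * ‖v t‖ ^ 2) 0 t := fun t ht => by
    refine ((hasDerivAt_norm_sq_of_hasDerivAt_smul (hu t ht)).fun_mul
      (hasDerivAt_norm_sq_of_hasDerivAt_smul (hv t ht))).congr_deriv ?_
    ring
  intro T hT
  have hsq := constant_of_has_deriv_right_zero (a := 0) (b := T)
    (fun t ht => (hderiv t ht.1).continuousAt.continuousWithinAt)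
    (fun t ht => (hderiv t ht.1).hasDerivWithinAt) T ⟨hT, le_rfl⟩
  rw [← mul_pow, ← mul_pow] at hsq
  exact (pow_left_inj₀ (by positivity) (by positivity) two_ne_zero).1 hsq

lemma norm_sub_mul_norm_add_le (a b : E) : ‖a - b‖ * ‖a + b‖ ≤ ‖a‖ ^ 2 + ‖b‖ ^ 2 := by
  nlinarith [two_mul_le_add_sq ‖a - b‖ ‖a + b‖, parallelogram_law_with_norm ℝ a b]

end VectorODE

section CriticalPoints

variable {f : ℝ → ℝ} {fmin : ℝ}

lemma eq_of_deriv_eq_zero_of_le_abs_deriv {α : ℝ → ℝ} (hfmin : ∀ z, fmin ≤ f z)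
    (hαpos : ∀ x, 0 < x → 0 < α x) (hPL : ∀ z, α (f z - fmin) ≤ |deriv f z|) {z : ℝ}
    (hz : deriv f z = 0) : f z = fmin := by
  by_contra hne
  have := hPL z
  rw [hz, abs_zero] at this
  exact this.not_gt (hαpos _ (sub_pos.2 ((hfmin z).lt_of_ne' hne)))

lemma le_of_deriv_mul_sub_nonneg (hf : Differentiable ℝ f)
    (hcrit : ∀ z, deriv f z = 0 → f z = fmin) {a z : ℝ} (ha : fmin < f a)
    (hz : 0 ≤ deriv f a * (z - a)) : f a ≤ f z := by
  by_contra! hlt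
  -- a maximiser `q` of `f` on `[a, z]` has `f q > fmin`, so it is not a critical point; Fermat's
  -- rule excludes `q = a` (as `f` increases from `a` towards `z`) and an interior `q`
  obtain ⟨q, hq, hmax⟩ := (isCompact_uIcc (a := a) (b := z)).exists_isMaxOn nonempty_uIcc
    hf.continuous.continuousOn
  have haq : f a ≤ f q := hmax left_mem_uIcc
  rcases eq_or_ne q a with rfl | hqa
  · have hslope := hmax.localize.hasFDerivWithinAt_nonpos
      (hf q).hasDerivAt.hasFDerivAt.hasFDerivWithinAt
      (sub_mem_posTangentConeAt_of_segment_subset (segment_eq_uIcc q z).subset)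
    have hza : z - q ≠ 0 := sub_ne_zero.2 (by rintro rfl; exact lt_irrefl _ hlt)
    have hd : deriv f q ≠ 0 := fun h => ha.ne' (hcrit q h)
    rw [ContinuousLinearMap.toSpanSingleton_apply, smul_eq_mul, mul_comm] at hslope
    exact mul_ne_zero hd hza (le_antisymm (by linarith) hz)
  · have hqz : q ≠ z := by rintro rfl; exact lt_irrefl _ (hlt.trans_le haq)
    have hnhds : uIcc a z ∈ 𝓝 q := by
      rw [uIcc] at hq ⊢
      have hend : ∀ c, c = a ∨ c = z → c ≠ q := by
        rintro c (rfl | rfl)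
        exacts [hqa.symm, hqz.symm]
      exact Icc_mem_nhds (hq.1.lt_of_ne (hend _ (min_choice a z)))
        (hq.2.lt_of_ne' (hend _ (max_choice a z)))
    have := hcrit q (hmax.isLocalMax hnhds).deriv_eq_zero
    linarith

lemma tendsto_of_hasDerivAt_le_neg_mul_deriv_sq (hf : Continuous f) (hf' : Continuous (deriv f))
    (hproper : ∀ c, IsCompact {z | f z ≤ c}) (hfmin : ∀ z, fmin ≤ f z)
    (hcrit : ∀ z, deriv f z = 0 → f z = fmin) {x F' : ℝ → ℝ} {b : ℝ} (hb : 0 < b)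
    (hF : ∀ t, 0 ≤ t → HasDerivAt (fun t => f (x t)) (F' t) t)
    (hF' : ∀ t, 0 ≤ t → F' t ≤ -(b * deriv f (x t) ^ 2)) :
    Tendsto (fun t => f (x t)) atTop (𝓝 fmin) := by
  have hanti : AntitoneOn (fun t => f (x t)) (Ici 0) :=
    antitoneOn_of_hasDerivAt_nonpos hF fun t ht => (hF' t ht).trans (neg_nonpos.2 (by positivity))
  suffices key : ∀ ε > 0, ∃ t₀, 0 ≤ t₀ ∧ f (x t₀) < fmin + ε by
    refine tendsto_order.2 ⟨fun c hc => .of_forall fun t => hc.trans_le (hfmin _), fun c hc => ?_⟩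
    obtain ⟨t₀, ht₀, hlt⟩ := key (c - fmin) (sub_pos.2 hc)
    filter_upwards [eventually_ge_atTop t₀] with t ht
    linarith [hanti ht₀ (ht₀.trans ht) ht]
  intro ε hε
  by_contra! hfar
  -- the trajectory stays in a compact set free of critical points, so `|f'|` is bounded below
  set K := {z | f z ≤ f (x 0)} ∩ f ⁻¹' Ici (fmin + ε)
  have hK : IsCompact K := (hproper _).inter_right (isClosed_Ici.preimage hf)
  have hxK : ∀ t, 0 ≤ t → x t ∈ K := fun t ht => ⟨hanti self_mem_Ici ht ht, hfar t ht⟩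
  obtain ⟨z₀, hz₀, hmin⟩ :=
    hK.exists_isMinOn ⟨x 0, hxK 0 le_rfl⟩ (continuous_abs.comp hf').continuousOn
  have hδ : 0 < |deriv f z₀| := abs_pos.2 fun h => by
    have := hz₀.2; rw [mem_preimage, hcrit z₀ h, mem_Ici] at this; linarith
  set c := b * |deriv f z₀| ^ 2
  have hdecay : ∀ t, 0 ≤ t → F' t ≤ -c := fun t ht => by
    have hle : |deriv f z₀| ≤ |deriv f (x t)| := hmin (hxK t ht)
    have hsq : |deriv f z₀| ^ 2 ≤ deriv f (x t) ^ 2 := by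
      rw [← sq_abs (deriv f (x t))]; exact pow_le_pow_left₀ hδ.le hle 2
    linarith [hF' t ht, mul_le_mul_of_nonneg_left hsq hb.le]
  set T := (f (x 0) - fmin) / c
  have hT : 0 ≤ T := div_nonneg (by linarith [hfmin (x 0)]) (by positivity)
  have := le_add_mul_of_hasDerivAt_le hF hdecay le_rfl hT
  have hcT : c * T = f (x 0) - fmin := mul_div_cancel₀ _ (by positivity)
  linarith [hfar T hT]

end CriticalPoints

namespace IsVecFlowAt

variable {k : ℕ} {f : ℝ → ℝ} {w1 w2 : ℝ → EVec k} {t : ℝ}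

lemma hasDerivAt_inner (h : IsVecFlowAt f w1 w2 t) :
    HasDerivAt (fun t => ⟪w2 t, w1 t⟫)
      (-(deriv f ⟪w2 t, w1 t⟫ * (‖w1 t‖ ^ 2 + ‖w2 t‖ ^ 2))) t := by
  refine (h.2.inner ℝ h.1).congr_deriv ?_
  rw [real_inner_smul_left, real_inner_smul_right, real_inner_self_eq_norm_sq,
    real_inner_self_eq_norm_sq]
  ring

lemma hasDerivAt_comp_inner (h : IsVecFlowAt f w1 w2 t)
    (hf : DifferentiableAt ℝ f ⟪w2 t, w1 t⟫) :
    HasDerivAt (fun t => f ⟪w2 t, w1 t⟫)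
      (-((‖w1 t‖ ^ 2 + ‖w2 t‖ ^ 2) * deriv f ⟪w2 t, w1 t⟫ ^ 2)) t :=
  (hf.hasDerivAt.comp t h.hasDerivAt_inner).congr_deriv (by ring)

lemma hasDerivAt_sub_smul (h : IsVecFlowAt f w1 w2 t) {s : ℝ} (hs : |s| = 1) :
    HasDerivAt (fun t => w1 t - s • w2 t)
      ((s * deriv f ⟪w2 t, w1 t⟫) • (w1 t - s • w2 t)) t := by
  refine (h.1.sub (h.2.const_smul s)).congr_deriv ?_
  have hss : s * s = 1 := by rw [← abs_mul_abs_self, hs, one_mul]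
  rw [smul_sub, smul_smul, smul_smul, mul_right_comm, hss, one_mul]
  module

end IsVecFlowAt

section Flow

variable {k : ℕ} {f : ℝ → ℝ} {w1 w2 : ℝ → EVec k}

lemma continuousOn_deriv_comp_inner (hf' : Continuous (deriv f))
    (hflow : ∀ t, 0 ≤ t → IsVecFlowAt f w1 w2 t) :
    ContinuousOn (fun t => deriv f ⟪w2 t, w1 t⟫) (Ici 0) :=
  hf'.comp_continuousOn fun t ht => (hflow t ht).hasDerivAt_inner.continuousAt.continuousWithinAt

lemma sub_smul_eq_zero_of_isVecFlowAt (hf' : Continuous (deriv f))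
    (hflow : ∀ t, 0 ≤ t → IsVecFlowAt f w1 w2 t) {s : ℝ} (hs : |s| = 1)
    (h0 : w1 0 - s • w2 0 = 0) : ∀ t, 0 ≤ t → w1 t - s • w2 t = 0 :=
  eq_zero_of_hasDerivAt_smul_self (continuousOn_const.mul (continuousOn_deriv_comp_inner hf' hflow))
    (fun t ht => (hflow t ht).hasDerivAt_sub_smul hs) h0

lemma norm_sub_smul_mul_norm_add_smul_eq (hflow : ∀ t, 0 ≤ t → IsVecFlowAt f w1 w2 t) {s : ℝ}
    (hs : |s| = 1) (t : ℝ) (ht : 0 ≤ t) :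
    ‖w1 t - s • w2 t‖ * ‖w1 t + s • w2 t‖ = ‖w1 0 - s • w2 0‖ * ‖w1 0 + s • w2 0‖ :=
  norm_mul_norm_eq_of_hasDerivAt_smul (u := fun t => w1 t - s • w2 t)
    (v := fun t => w1 t + s • w2 t) (fun t ht => (hflow t ht).hasDerivAt_sub_smul hs)
    (fun t ht => by
      have := (hflow t ht).hasDerivAt_sub_smul (s := -s) (by rwa [abs_neg])
      simp only [neg_smul, sub_neg_eq_add, neg_mul] at this
      rwa [neg_smul]) t ht

lemma exists_pos_le_norm_sq_of_eq_neg_smul (hf' : Continuous (deriv f))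
    (hflow : ∀ t, 0 ≤ t → IsVecFlowAt f w1 w2 t) {s : ℝ} (hs : |s| = 1)
    (hs0 : 0 < s * deriv f 0) (hw : ∀ t, 0 ≤ t → w1 t = (-s) • w2 t) (hw0 : w2 0 ≠ 0) :
    ∃ m > 0, ∀ t, 0 ≤ t → m ≤ ‖w2 t‖ ^ 2 := by
  obtain ⟨ε, hε, hpos⟩ := Metric.eventually_nhds_iff.1
    (((continuous_const.mul hf').tendsto 0).eventually_const_lt hs0)
  have hinner : ∀ t, 0 ≤ t → ⟪w2 t, w1 t⟫ = -s * ‖w2 t‖ ^ 2 := fun t ht => by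
    rw [hw t ht, real_inner_smul_right, real_inner_self_eq_norm_sq]
  have hderiv : ∀ t, 0 ≤ t → HasDerivAt (‖w2 ·‖ ^ 2)
      (2 * (s * deriv f ⟪w2 t, w1 t⟫) * ‖w2 t‖ ^ 2) t := fun t ht =>
    hasDerivAt_norm_sq_of_hasDerivAt_smul
      ((hflow t ht).2.congr_deriv (by rw [hw t ht, smul_smul]; ring_nf))
  have hm : 0 < min (‖w2 0‖ ^ 2) (ε / 2) := lt_min (pow_pos (norm_pos_iff.2 hw0) 2) (half_pos hε)
  refine ⟨_, hm, le_of_hasDerivAt_pos_of_eq hderiv (min_le_left _ _) fun t ht heq => ?_⟩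
  have hnear : dist ⟪w2 t, w1 t⟫ 0 < ε := by
    rw [hinner t ht, heq, dist_zero_right, norm_mul, norm_neg, Real.norm_eq_abs, hs, one_mul,
      Real.norm_of_nonneg hm.le]
    linarith [min_le_right (‖w2 0‖ ^ 2) (ε / 2)]
  have := hpos hnear
  rw [heq]
  positivity

lemma exists_pos_le_norm_sq_add_norm_sq (hf' : Continuous (deriv f))
    (hflow : ∀ t, 0 ≤ t → IsVecFlowAt f w1 w2 t) {s : ℝ} (hs : |s| = 1)
    (hs0 : 0 < s * deriv f 0) (hu0 : w1 0 - s • w2 0 ≠ 0) :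
    ∃ b > 0, ∀ t, 0 ≤ t → b ≤ ‖w1 t‖ ^ 2 + ‖w2 t‖ ^ 2 := by
  by_cases hv0 : w1 0 + s • w2 0 = 0
  · have hv : ∀ t, 0 ≤ t → w1 t = (-s) • w2 t := fun t ht => sub_eq_zero.1 <|
      sub_smul_eq_zero_of_isVecFlowAt hf' hflow (by rwa [abs_neg])
        (by rwa [neg_smul, sub_neg_eq_add]) t ht
    have hw0 : w2 0 ≠ 0 := fun h => hu0 (by simp [hv 0 le_rfl, h])
    obtain ⟨m, hm, hmle⟩ := exists_pos_le_norm_sq_of_eq_neg_smul hf' hflow hs hs0 hv hw0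
    exact ⟨m, hm, fun t ht => le_add_of_nonneg_of_le (sq_nonneg _) (hmle t ht)⟩
  · refine ⟨_, mul_pos (norm_pos_iff.2 hu0) (norm_pos_iff.2 hv0), fun t ht => ?_⟩
    rw [← norm_sub_smul_mul_norm_add_smul_eq hflow hs t ht]
    convert norm_sub_mul_norm_add_le (w1 t) (s • w2 t) using 3
    rw [norm_smul, Real.norm_eq_abs, hs, one_mul]

end Flow

theorem stmt4_general {k : ℕ} (f : ℝ → ℝ) (fmin : ℝ)
    (hanalytic : ∀ x : ℝ, AnalyticAt ℝ f x)
    (hfmin_le : ∀ z : ℝ, fmin ≤ f z)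
    (hproper : ∀ c : ℝ, IsCompact {z : ℝ | f z ≤ c})
    (hf0 : fmin < f 0)
    (α : ℝ → ℝ) (hαpos : ∀ x : ℝ, 0 < x → 0 < α x)
    (hPL : ∀ z : ℝ, α (f z - fmin) ≤ |deriv f z|)
    (w1 w2 : ℝ → EVec k)
    (hflow : ∀ t : ℝ, 0 ≤ t → IsVecFlowAt f w1 w2 t) :
    Filter.Tendsto (fun t : ℝ => f ⟪w2 t, w1 t⟫) Filter.atTop (nhds fmin) ↔
      0 < ‖w1 0 - Real.sign (deriv f 0) • w2 0‖ := by
  have hdiff : Differentiable ℝ f := fun x => (hanalytic x).differentiableAt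
  have hf' : Continuous (deriv f) :=
    (contDiff_iff_contDiffAt.2 fun x => (hanalytic x).contDiffAt).continuous_deriv (n := 1) le_rfl
  have hcrit : ∀ z, deriv f z = 0 → f z = fmin := fun _ =>
    eq_of_deriv_eq_zero_of_le_abs_deriv hfmin_le hαpos hPL
  have hd0 : deriv f 0 ≠ 0 := fun h => hf0.ne' (hcrit 0 h)
  have hs : |Real.sign (deriv f 0)| = 1 := by
    rcases Real.sign_apply_eq_of_ne_zero _ hd0 with h | h <;> simp [h]
  constructor
  · intro htend
    by_contra! hu0
    have hu := sub_smul_eq_zero_of_isVecFlowAt hf' hflow hs (norm_le_zero_iff.1 hu0)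
    refine hf0.not_ge (ge_of_tendsto htend (eventually_atTop.2 ⟨0, fun t ht => ?_⟩))
    refine le_of_deriv_mul_sub_nonneg hdiff hcrit hf0 ?_
    rw [sub_eq_zero.1 (hu t ht), real_inner_smul_right, real_inner_self_eq_norm_sq, sub_zero,
      ← mul_assoc, mul_comm (deriv f 0)]
    exact mul_nonneg (Real.sign_mul_nonneg _) (sq_nonneg _)
  · intro hu0
    obtain ⟨b, hb, hbS⟩ := exists_pos_le_norm_sq_add_norm_sq hf' hflow hs
      (Real.sign_mul_pos_of_ne_zero _ hd0) (norm_pos_iff.1 hu0)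
    exact tendsto_of_hasDerivAt_le_neg_mul_deriv_sq hdiff.continuous hf' hproper hfmin_le hcrit hb
      (fun t ht => (hflow t ht).hasDerivAt_comp_inner (hdiff _))
      fun t ht => neg_le_neg (mul_le_mul_of_nonneg_right (hbS t ht) (sq_nonneg _))

/-- Suppose `f : ℝ → ℝ` is real analytic, bounded below with attained minimum
`fmin`, proper, `f 0 > fmin`, and satisfies a positive-definite Polyak–Łojasiewicz inequality
`|f'(z)| ≥ α(f z − fmin)`; set `s = sign f'(0)`.  Then for any initialization, a global
solution of the vector overparameterized gradient flow satisfies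
`lim_{t→∞} f(⟪w₂(t), w₁(t)⟫) = fmin` iff `‖w₁(0) − s w₂(0)‖ > 0`. -/
theorem stmt4 {k : ℕ} (hk : 1 ≤ k) (f : ℝ → ℝ) (fmin : ℝ)
    (hanalytic : ∀ x : ℝ, AnalyticAt ℝ f x)
    (hfmin_le : ∀ z : ℝ, fmin ≤ f z)
    (hfmin_attained : ∃ z : ℝ, f z = fmin)
    (hproper : ∀ c : ℝ, IsCompact {z : ℝ | f z ≤ c})
    (hf0 : fmin < f 0)
    (α : ℝ → ℝ) (hα0 : α 0 = 0) (hαpos : ∀ x : ℝ, 0 < x → 0 < α x)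
    (hαnonneg : ∀ x : ℝ, 0 ≤ x → 0 ≤ α x)
    (hPL : ∀ z : ℝ, α (f z - fmin) ≤ |deriv f z|)
    (w1 w2 : ℝ → EVec k)
    (hflow : ∀ t : ℝ, 0 ≤ t → IsVecFlowAt f w1 w2 t) :
    Filter.Tendsto (fun t : ℝ => f ⟪w2 t, w1 t⟫) Filter.atTop (nhds fmin) ↔
      0 < ‖w1 0 - Real.sign (deriv f 0) • w2 0‖ :=
  stmt4_general f fmin hanalytic hfmin_le hproper hf0 α hαpos hPL w1 w2 hflow
end
end

section
/- Suppose f : ℝ → ℝ is real analytic, bounded below with attained minimum value f_min, proper (every sublevel set is compact), and f(0) > f_min. Let w̄ = (w̄_1, w̄_2) and w̃ = (w̃_1, w̃_2) be two initializations in ℝ^k × ℝ^k such that (i) ⟨w̄_2, w̄_1⟩ = ⟨w̃_2, w̃_1⟩ and (ii) c(w̄) > c(w̃), where c(w) := 2·trace(𝒞(w)²) − trace(𝒞(w))² with 𝒞(w) := w_1 w_1ᵀ − w_2 w_2ᵀ. If the solutions of the vector overparameterized gradient flow initialized at w̄ and at w̃ both exist for all t ≥ 0, then for all t > 0 the cost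 along the first solution is at most that along the second: f(⟨w_2(t; w̄), w_1(t; w̄)⟩) ≤ f(⟨w_2(t; w̃), w_1(t; w̃)⟩). If additionally f'(⟨w̄_2, w̄_1⟩) ≠ 0, the inequality is strict for all t > 0. -/
open scoped RealInnerProductSpace

noncomputable section

/-- The imbalance matrix `𝒞(w) = w₁ w₁ᵀ − w₂ w₂ᵀ`. -/
def imbalMat {k : ℕ} (w1 w2 : EVec k) : Matrix (Fin k) (Fin k) ℝ :=
  Matrix.of fun i j => w1 i * w1 j - w2 i * w2 j

/-- The imbalance measure `c(w) = 2 trace(𝒞(w)²) − trace(𝒞(w))²`. -/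
def imbal {k : ℕ} (w1 w2 : EVec k) : ℝ :=
  2 * (imbalMat w1 w2 * imbalMat w1 w2).trace - (imbalMat w1 w2).trace ^ 2

/-!
Along the flow, `x = ⟪w₂, w₁⟫` and `S = ‖w₁‖² + ‖w₂‖²` satisfy `ẋ = -f'(x) S` and
`Ṡ = -4 f'(x) x`, so `S² - 4x² = c(w)` is conserved and `x` solves the scalar equation
`ẋ = -f'(x) √(c + 4x²)`. Two solutions of it from the same point `x₀` with `c̄ > c̃` follow
the same gradient-flow path of `f`, the first one faster. If `f'(x₀) > 0`, critical points of `f`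
are equilibria that neither solution can cross, so both stay in an interval below `x₀` on which
`f' > 0`; there the larger speed keeps `x̄ < x̃` for `t > 0`, and `f` is strictly increasing.
The case `f'(x₀) < 0` is the mirror image, and if `f'(x₀) = 0` both solutions are constant.
-/

open Set

section AutonomousODE

variable {v x : ℝ → ℝ}

theorem eq_of_hasDerivAt_of_apply_eq_zero (hv : LocallyLipschitz v)
    (hx : ∀ t, 0 ≤ t → HasDerivAt x (v (x t)) t) {z t₁ t : ℝ} (hz : v z = 0) (ht₁ : 0 ≤ t₁)
    (hxz : x t₁ = z) (ht : 0 ≤ t) : x t = z := by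
  set T := max t t₁
  have hxT : ContinuousOn x (Icc 0 T) := fun s hs => (hx s hs.1).continuousAt.continuousWithinAt
  obtain ⟨K, hK⟩ := hv.locallyLipschitzOn.exists_lipschitzOnWith_of_compact
    ((isCompact_Icc.image_of_continuousOn hxT).union isCompact_singleton)
  have hxs : ∀ s ∈ Icc 0 T, x s ∈ x '' Icc 0 T ∪ {z} := fun s hs => .inl (mem_image_of_mem x hs)
  have hconst : ∀ s, HasDerivAt (fun _ => z) (v z) s := fun s => hz ▸ hasDerivAt_const (𝕜 := ℝ) s z
  rcases le_total t t₁ with h | h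
  · exact ODE_solution_unique_of_mem_Icc_left (v := fun _ => v) (fun _ _ => hK)
      (hxT.mono (Icc_subset_Icc ht (le_max_right _ _)))
      (fun s hs => (hx s (ht.trans hs.1.le)).hasDerivWithinAt)
      (fun s hs => hxs s ⟨ht.trans hs.1.le, hs.2.trans (le_max_right _ _)⟩)
      continuousOn_const (fun s _ => (hconst s).hasDerivWithinAt) (fun _ _ => .inr rfl) hxz
      ⟨le_rfl, h⟩
  · exact ODE_solution_unique_of_mem_Icc_right (v := fun _ => v) (fun _ _ => hK)
      (hxT.mono (Icc_subset_Icc ht₁ (le_max_left _ _)))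
      (fun s hs => (hx s (ht₁.trans hs.1)).hasDerivWithinAt)
      (fun s hs => hxs s ⟨ht₁.trans hs.1, hs.2.le.trans (le_max_left _ _)⟩)
      continuousOn_const (fun s _ => (hconst s).hasDerivWithinAt) (fun _ _ => .inr rfl) hxz
      ⟨h, le_rfl⟩

theorem lt_of_hasDerivAt_of_apply_eq_zero (hv : LocallyLipschitz v)
    (hx : ∀ t, 0 ≤ t → HasDerivAt x (v (x t)) t) {z t : ℝ} (hz : v z = 0) (h₀ : z < x 0)
    (ht : 0 ≤ t) : z < x t := by
  by_contra! hle
  obtain ⟨s, hs, hxs⟩ := intermediate_value_Icc' ht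
    (fun s hs => (hx s hs.1).continuousAt.continuousWithinAt) ⟨hle, h₀.le⟩
  exact h₀.ne' (eq_of_hasDerivAt_of_apply_eq_zero hv hx hz hs.1 hxs le_rfl)

theorem le_of_hasDerivAt_of_apply_nonpos (hv : LocallyLipschitz v)
    (hx : ∀ t, 0 ≤ t → HasDerivAt x (v (x t)) t) {b t : ℝ} (hb : v b ≤ 0) (h₀ : x 0 ≤ b)
    (ht : 0 ≤ t) : x t ≤ b := by
  have hxt : ContinuousOn x (Icc 0 t) := fun s hs => (hx s hs.1).continuousAt.continuousWithinAt
  rcases hb.lt_or_eq with hb | hb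
  · exact image_le_of_deriv_right_lt_deriv_boundary' hxt
      (fun s hs => (hx s hs.1).hasDerivWithinAt) h₀ continuousOn_const
      (fun s _ => hasDerivWithinAt_const s _ b) (fun s _ hs => hs ▸ hb) ⟨ht, le_rfl⟩
  · by_contra! hlt
    obtain ⟨s, hs, hxs⟩ := intermediate_value_Icc ht hxt ⟨h₀, hlt.le⟩
    exact hlt.ne' (eq_of_hasDerivAt_of_apply_eq_zero hv hx hb hs.1 hxs ht)

end AutonomousODE

theorem image_lt_of_deriv_lt_deriv_boundary {x y x' y' : ℝ → ℝ}
    (hx : ∀ t, 0 ≤ t → HasDerivAt x (x' t) t) (hy : ∀ t, 0 ≤ t → HasDerivAt y (y' t) t)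
    (h₀ : x 0 = y 0) (hlt : ∀ t, 0 ≤ t → x t = y t → x' t < y' t) {t : ℝ} (ht : 0 < t) :
    x t < y t := by
  have hle : ∀ s, 0 ≤ s → x s ≤ y s := fun s hs =>
    image_le_of_deriv_right_lt_deriv_boundary'
      (fun r hr => (hx r hr.1).continuousAt.continuousWithinAt)
      (fun r hr => (hx r hr.1).hasDerivWithinAt) h₀.le
      (fun r hr => (hy r hr.1).continuousAt.continuousWithinAt)
      (fun r hr => (hy r hr.1).hasDerivWithinAt) (fun r hr => hlt r hr.1) ⟨hs, le_rfl⟩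
  refine (hle t ht.le).lt_of_ne fun heq => (hlt t ht.le heq).ne' ?_
  have hmin : IsLocalMin (fun s => y s - x s) t := by
    filter_upwards [lt_mem_nhds ht] with s hs
    simpa [heq] using hle s hs.le
  exact sub_eq_zero.mp (hmin.hasDerivAt_eq_zero ((hy t ht.le).sub (hx t ht.le)))

def reducedField (f : ℝ → ℝ) (c x : ℝ) : ℝ := -deriv f x * √(c + 4 * x ^ 2)

section ReducedFlow

variable {f : ℝ → ℝ}

theorem locallyLipschitz_reducedField (hf : ContDiff ℝ 2 f) {c : ℝ} (hc : 0 ≤ c) :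
    LocallyLipschitz (reducedField f c) := by
  have hslope : LocallyLipschitz fun x => -deriv f x :=
    ((contDiff_succ_iff_deriv (n := 1)).mp hf).2.2.neg.locallyLipschitz
  have hspeed : LocallyLipschitz fun x : ℝ => √(c + 4 * x ^ 2) := by
    have heq : (fun x : ℝ => √(c + 4 * x ^ 2)) = fun x => ‖(√c : ℂ) + ((2 * x : ℝ) : ℂ) * .I‖ := by
      ext x
      rw [Complex.norm_add_mul_I, Real.sq_sqrt hc]
      ring_nf
    rw [heq]
    exact lipschitzWith_one_norm.locallyLipschitz.comp (ContDiff.locallyLipschitz (𝕂 := ℝ)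
      (contDiff_const.add ((Complex.ofRealCLM.contDiff.comp
        (contDiff_const.mul contDiff_id)).mul contDiff_const)))
  exact (contDiff_mul (𝕜 := ℝ)).locallyLipschitz.comp (hslope.prodMk hspeed)

theorem reducedField_eq_zero {c z : ℝ} (hz : deriv f z = 0) : reducedField f c z = 0 := by
  simp [reducedField, hz]

theorem reducedField_nonpos {c u : ℝ} (hu : 0 ≤ deriv f u) : reducedField f c u ≤ 0 :=
  mul_nonpos_of_nonpos_of_nonneg (neg_nonpos.mpr hu) (Real.sqrt_nonneg _)

theorem reducedField_lt_reducedField {c c' u : ℝ} (hc : 0 ≤ c) (hcc' : c < c')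
    (hu : 0 < deriv f u) : reducedField f c' u < reducedField f c u := by
  have : √(c + 4 * u ^ 2) < √(c' + 4 * u ^ 2) := Real.sqrt_lt_sqrt (by positivity) (by linarith)
  unfold reducedField
  nlinarith

theorem reducedField_comp_neg (c u : ℝ) :
    reducedField (fun y => f (-y)) c (-u) = -reducedField f c u := by
  simp [reducedField, deriv_comp_neg]

theorem deriv_pos_of_hasDerivAt_reducedField (hf : ContDiff ℝ 2 f) {c : ℝ} (hc : 0 ≤ c)
    {x : ℝ → ℝ} (hx : ∀ t, 0 ≤ t → HasDerivAt x (reducedField f c (x t)) t)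
    (h₀ : 0 < deriv f (x 0)) {t : ℝ} (ht : 0 ≤ t) : ∀ u ∈ Icc (x t) (x 0), 0 < deriv f u := by
  intro u hu
  by_contra! hle
  obtain ⟨z, hz, hfz⟩ := intermediate_value_Icc hu.2
    (hf.continuous_deriv one_le_two).continuousOn ⟨hle, h₀.le⟩
  have hz₀ : z < x 0 := hz.2.lt_of_ne (by rintro rfl; exact h₀.ne' hfz)
  have hzx := lt_of_hasDerivAt_of_apply_eq_zero (locallyLipschitz_reducedField hf hc) hx
    (reducedField_eq_zero hfz) hz₀ ht
  linarith [hu.1, hz.1]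

variable {cb ct : ℝ} {xb xt : ℝ → ℝ}

theorem apply_lt_of_reducedField_of_deriv_pos (hf : ContDiff ℝ 2 f) (hct : 0 ≤ ct)
    (hcbt : ct < cb) (hxb : ∀ t, 0 ≤ t → HasDerivAt xb (reducedField f cb (xb t)) t)
    (hxt : ∀ t, 0 ≤ t → HasDerivAt xt (reducedField f ct (xt t)) t) (h₀ : xb 0 = xt 0)
    (hpos : 0 < deriv f (xb 0)) {t : ℝ} (ht : 0 < t) : f (xb t) < f (xt t) := by
  have hcb : 0 ≤ cb := hct.trans hcbt.le
  have hderiv : ∀ s, 0 ≤ s → ∀ u ∈ Icc (xb s) (xb 0), 0 < deriv f u := fun s hs =>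
    deriv_pos_of_hasDerivAt_reducedField hf hcb hxb hpos hs
  have hxb_le : ∀ s, 0 ≤ s → xb s ≤ xb 0 := fun s hs =>
    le_of_hasDerivAt_of_apply_nonpos (locallyLipschitz_reducedField hf hcb) hxb
      (reducedField_nonpos hpos.le) le_rfl hs
  have hxt_le : xt t ≤ xb 0 :=
    le_of_hasDerivAt_of_apply_nonpos (locallyLipschitz_reducedField hf hct) hxt
      (reducedField_nonpos hpos.le) h₀.ge ht.le
  have hlt : xb t < xt t := image_lt_of_deriv_lt_deriv_boundary hxb hxt h₀
    (fun s hs hxs => hxs ▸ reducedField_lt_reducedField hct hcbt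
      (hderiv s hs _ ⟨le_rfl, hxb_le s hs⟩)) ht
  have hmono : StrictMonoOn f (Icc (xb t) (xb 0)) :=
    strictMonoOn_of_deriv_pos (convex_Icc _ _) hf.continuous.continuousOn
      fun u hu => hderiv t ht.le u (interior_subset hu)
  exact hmono ⟨le_rfl, hxb_le t ht.le⟩ ⟨hlt.le, hxt_le⟩ hlt

theorem apply_lt_of_reducedField_of_deriv_ne_zero (hf : ContDiff ℝ 2 f) (hct : 0 ≤ ct)
    (hcbt : ct < cb) (hxb : ∀ t, 0 ≤ t → HasDerivAt xb (reducedField f cb (xb t)) t)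
    (hxt : ∀ t, 0 ≤ t → HasDerivAt xt (reducedField f ct (xt t)) t) (h₀ : xb 0 = xt 0)
    (hne : deriv f (xb 0) ≠ 0) {t : ℝ} (ht : 0 < t) : f (xb t) < f (xt t) := by
  rcases hne.lt_or_gt with hneg | hpos
  · have hreflect : ∀ (c : ℝ) (x : ℝ → ℝ),
        (∀ t, 0 ≤ t → HasDerivAt x (reducedField f c (x t)) t) →
        ∀ t, 0 ≤ t → HasDerivAt (fun s => -x s) (reducedField (fun y => f (-y)) c (-x t)) t :=
      fun c x hx t ht => by rw [reducedField_comp_neg]; exact (hx t ht).neg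
    simpa using apply_lt_of_reducedField_of_deriv_pos (f := fun y => f (-y))
      (hf.comp contDiff_neg) hct hcbt (hreflect cb xb hxb) (hreflect ct xt hxt) (neg_inj.mpr h₀)
      (by rw [deriv_comp_neg, neg_neg]; exact neg_pos.mpr hneg) ht
  · exact apply_lt_of_reducedField_of_deriv_pos hf hct hcbt hxb hxt h₀ hpos ht

theorem apply_le_of_reducedField (hf : ContDiff ℝ 2 f) (hct : 0 ≤ ct)
    (hcbt : ct < cb) (hxb : ∀ t, 0 ≤ t → HasDerivAt xb (reducedField f cb (xb t)) t)
    (hxt : ∀ t, 0 ≤ t → HasDerivAt xt (reducedField f ct (xt t)) t) (h₀ : xb 0 = xt 0)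
    {t : ℝ} (ht : 0 < t) : f (xb t) ≤ f (xt t) := by
  by_cases hne : deriv f (xb 0) = 0
  · have hxb_eq := eq_of_hasDerivAt_of_apply_eq_zero
      (locallyLipschitz_reducedField hf (hct.trans hcbt.le)) hxb (reducedField_eq_zero hne)
      le_rfl rfl ht.le
    have hxt_eq := eq_of_hasDerivAt_of_apply_eq_zero (locallyLipschitz_reducedField hf hct) hxt
      (reducedField_eq_zero hne) le_rfl h₀.symm ht.le
    rw [hxb_eq, hxt_eq]
  · exact (apply_lt_of_reducedField_of_deriv_ne_zero hf hct hcbt hxb hxt h₀ hne ht).le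

end ReducedFlow

theorem imbalMat_eq_vecMulVec_sub {k : ℕ} (u v : EVec k) :
    imbalMat u v = Matrix.vecMulVec ⇑u ⇑u - Matrix.vecMulVec ⇑v ⇑v := by
  ext i j
  simp [imbalMat, Matrix.vecMulVec_apply]

theorem imbal_eq {k : ℕ} (u v : EVec k) :
    imbal u v = (‖u‖ ^ 2 + ‖v‖ ^ 2) ^ 2 - 4 * ⟪v, u⟫ ^ 2 := by
  simp only [imbal, imbalMat_eq_vecMulVec_sub, sub_mul, mul_sub, Matrix.vecMulVec_mul_vecMulVec,
    Matrix.trace_sub, Matrix.trace_vecMulVec, dotProduct_smul, smul_eq_mul,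
    ← real_inner_self_eq_norm_sq, EuclideanSpace.inner_eq_star_dotProduct, star_trivial]
  rw [dotProduct_comm (WithLp.ofLp v)]
  ring

theorem imbal_nonneg {k : ℕ} (u v : EVec k) : 0 ≤ imbal u v := by
  rw [imbal_eq]
  have := abs_real_inner_le_norm v u
  nlinarith [abs_nonneg ⟪v, u⟫, sq_abs ⟪v, u⟫, sq_nonneg (‖u‖ - ‖v‖), norm_nonneg u, norm_nonneg v]

section VecFlow

variable {k : ℕ} {f : ℝ → ℝ} {w1 w2 : ℝ → EVec k}

theorem IsVecFlowAt.hasDerivAt_inner_s5 {t : ℝ} (h : IsVecFlowAt f w1 w2 t) :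
    HasDerivAt (fun s => ⟪w2 s, w1 s⟫)
      (-deriv f ⟪w2 t, w1 t⟫ * (‖w1 t‖ ^ 2 + ‖w2 t‖ ^ 2)) t :=
  (h.2.inner ℝ h.1).congr_deriv (by
    simp only [real_inner_smul_left, real_inner_smul_right, real_inner_self_eq_norm_sq]; ring)

theorem IsVecFlowAt.hasDerivAt_imbal {t : ℝ} (h : IsVecFlowAt f w1 w2 t) :
    HasDerivAt (fun s => imbal (w1 s) (w2 s)) 0 t := by
  simp only [imbal_eq]
  refine (((h.1.norm_sq.add h.2.norm_sq).pow 2).sub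
    ((h.hasDerivAt_inner_s5.pow 2).const_mul 4)).congr_deriv ?_
  simp only [Pi.add_apply, real_inner_smul_right, real_inner_comm (w1 t) (w2 t)]
  ring

theorem imbal_eq_of_isVecFlowAt (hflow : ∀ t, 0 ≤ t → IsVecFlowAt f w1 w2 t) {t : ℝ}
    (ht : 0 ≤ t) : imbal (w1 t) (w2 t) = imbal (w1 0) (w2 0) :=
  constant_of_has_deriv_right_zero
    (fun s hs => (hflow s hs.1).hasDerivAt_imbal.continuousAt.continuousWithinAt)
    (fun s hs => (hflow s hs.1).hasDerivAt_imbal.hasDerivWithinAt) t ⟨ht, le_rfl⟩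

theorem hasDerivAt_reducedField_of_isVecFlowAt (hflow : ∀ t, 0 ≤ t → IsVecFlowAt f w1 w2 t)
    {t : ℝ} (ht : 0 ≤ t) :
    HasDerivAt (fun s => ⟪w2 s, w1 s⟫) (reducedField f (imbal (w1 0) (w2 0)) ⟪w2 t, w1 t⟫) t := by
  have hsum : ‖w1 t‖ ^ 2 + ‖w2 t‖ ^ 2 = √(imbal (w1 0) (w2 0) + 4 * ⟪w2 t, w1 t⟫ ^ 2) := by
    rw [← imbal_eq_of_isVecFlowAt hflow ht, imbal_eq, sub_add_cancel, Real.sqrt_sq (by positivity)]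
  simpa only [reducedField, ← hsum] using (hflow t ht).hasDerivAt_inner_s5

end VecFlow

theorem stmt5_general {k : ℕ} (f : ℝ → ℝ)
    (hanalytic : ∀ x : ℝ, AnalyticAt ℝ f x)
    (bw10 bw20 tw10 tw20 : EVec k)
    (hsameprod : ⟪bw20, bw10⟫ = ⟪tw20, tw10⟫)
    (himbal : imbal tw10 tw20 < imbal bw10 bw20)
    (bw1 bw2 tw1 tw2 : ℝ → EVec k)
    (hbinit1 : bw1 0 = bw10) (hbinit2 : bw2 0 = bw20)
    (htinit1 : tw1 0 = tw10) (htinit2 : tw2 0 = tw20)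
    (hbflow : ∀ t : ℝ, 0 ≤ t → IsVecFlowAt f bw1 bw2 t)
    (htflow : ∀ t : ℝ, 0 ≤ t → IsVecFlowAt f tw1 tw2 t) :
    (∀ t : ℝ, 0 < t → f ⟪bw2 t, bw1 t⟫ ≤ f ⟪tw2 t, tw1 t⟫) ∧
      (deriv f ⟪bw20, bw10⟫ ≠ 0 →
        ∀ t : ℝ, 0 < t → f ⟪bw2 t, bw1 t⟫ < f ⟪tw2 t, tw1 t⟫) := by
  subst hbinit1 hbinit2 htinit1 htinit2
  have hf : ContDiff ℝ 2 f := contDiff_iff_contDiffAt.mpr fun x => (hanalytic x).contDiffAt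
  have hxb := fun t => hasDerivAt_reducedField_of_isVecFlowAt hbflow (t := t)
  have hxt := fun t => hasDerivAt_reducedField_of_isVecFlowAt htflow (t := t)
  exact ⟨fun t ht => apply_le_of_reducedField hf (imbal_nonneg _ _) himbal hxb hxt hsameprod ht,
    fun hne t ht => apply_lt_of_reducedField_of_deriv_ne_zero hf (imbal_nonneg _ _) himbal hxb hxt
      hsameprod hne ht⟩

/-- (Imbalance-based acceleration.)  If two initializations `w̄` and `w̃`
have the same product `⟪w̄₂, w̄₁⟫ = ⟪w̃₂, w̃₁⟫` but `c(w̄) > c(w̃)`, then, whenever the two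
solutions of the vector overparameterized gradient flow exist for all `t ≥ 0`, the cost along
the solution started at `w̄` is at most that along the solution started at `w̃` for all
`t > 0`; if moreover `f'(⟪w̄₂, w̄₁⟫) ≠ 0`, the inequality is strict for all `t > 0`. -/
theorem stmt5 {k : ℕ} (hk : 1 ≤ k) (f : ℝ → ℝ) (fmin : ℝ)
    (hanalytic : ∀ x : ℝ, AnalyticAt ℝ f x)
    (hfmin_le : ∀ z : ℝ, fmin ≤ f z)
    (hfmin_attained : ∃ z : ℝ, f z = fmin)
    (hproper : ∀ c : ℝ, IsCompact {z : ℝ | f z ≤ c})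
    (hf0 : fmin < f 0)
    (bw10 bw20 tw10 tw20 : EVec k)
    (hsameprod : ⟪bw20, bw10⟫ = ⟪tw20, tw10⟫)
    (himbal : imbal tw10 tw20 < imbal bw10 bw20)
    (bw1 bw2 tw1 tw2 : ℝ → EVec k)
    (hbinit1 : bw1 0 = bw10) (hbinit2 : bw2 0 = bw20)
    (htinit1 : tw1 0 = tw10) (htinit2 : tw2 0 = tw20)
    (hbflow : ∀ t : ℝ, 0 ≤ t → IsVecFlowAt f bw1 bw2 t)
    (htflow : ∀ t : ℝ, 0 ≤ t → IsVecFlowAt f tw1 tw2 t) :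
    (∀ t : ℝ, 0 < t → f ⟪bw2 t, bw1 t⟫ ≤ f ⟪tw2 t, tw1 t⟫) ∧
      (deriv f ⟪bw20, bw10⟫ ≠ 0 →
        ∀ t : ℝ, 0 < t → f ⟪bw2 t, bw1 t⟫ < f ⟪tw2 t, tw1 t⟫) :=
  stmt5_general f hanalytic bw10 bw20 tw10 tw20 hsameprod himbal bw1 bw2 tw1 tw2 hbinit1 hbinit2
    htinit1 htinit2 hbflow htflow
end
end

section
/- Consider the planar system of ODEs ẇ_1 = (w_2 √(1 + w_1²) − w_2² w_1) / (1 + w_1²)², ẇ_2 = (w_1 √(1 + w_1²) − w_2 w_1²) / (1 + w_1²). Along any differentiable solution t ↦ (w_1(t), w_2(t)) of this system, the quantity 𝒞(w_1, w_2) := w_2² − (1/2)(1 + w_1²)² is constant in t. -/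
/-!
Since `σ'(z) = (1 + z²)^(-3/2)`, the flow has the form `ẇ₁ = w₂ r / (1 + w₁²)²`,
`ẇ₂ = w₁ r / (1 + w₁²)` with `r = √(1 + w₁²) - w₁ w₂`. Along any such flow
`d𝒞/dt = 2 w₂ ẇ₂ - 2 (1 + w₁²) w₁ ẇ₁ = 2 w₁ w₂ r / (1 + w₁²) - 2 w₁ w₂ r / (1 + w₁²) = 0`,
whatever `r` is.
-/

noncomputable def conservedQuantity (w₁ w₂ : ℝ) : ℝ :=
  w₂ ^ 2 - (1 / 2) * (1 + w₁ ^ 2) ^ 2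

theorem hasDerivAt_conservedQuantity_zero {w₁ w₂ : ℝ → ℝ} {r t : ℝ}
    (h₁ : HasDerivAt w₁ (w₂ t * r / (1 + w₁ t ^ 2) ^ 2) t)
    (h₂ : HasDerivAt w₂ (w₁ t * r / (1 + w₁ t ^ 2)) t) :
    HasDerivAt (fun t => conservedQuantity (w₁ t) (w₂ t)) 0 t := by
  have hq : 1 + w₁ t ^ 2 ≠ 0 := by positivity
  refine ((h₂.pow 2).sub ((((h₁.pow 2).const_add 1).pow 2).const_mul (1 / 2))).congr_deriv ?_
  simp only [Pi.pow_apply]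
  field_simp
  ring

theorem conservedQuantity_eq_of_flow {w₁ w₂ r : ℝ → ℝ}
    (h₁ : ∀ t, HasDerivAt w₁ (w₂ t * r t / (1 + w₁ t ^ 2) ^ 2) t)
    (h₂ : ∀ t, HasDerivAt w₂ (w₁ t * r t / (1 + w₁ t ^ 2)) t) (s t : ℝ) :
    conservedQuantity (w₁ s) (w₂ s) = conservedQuantity (w₁ t) (w₂ t) := by
  have hC t := hasDerivAt_conservedQuantity_zero (h₁ t) (h₂ t)
  exact is_const_of_deriv_eq_zero (fun t => (hC t).differentiableAt) (fun t => (hC t).deriv) s t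

/-- Along any differentiable solution of the planar system
`ẇ₁ = (w₂ √(1 + w₁²) − w₂² w₁)/(1 + w₁²)²`, `ẇ₂ = (w₁ √(1 + w₁²) − w₂ w₁²)/(1 + w₁²)`
(the gradient flow of `(1 − w₂ σ(w₁))²` with `σ(z) = z/√(1+z²)`), the quantity
`𝒞(w₁, w₂) = w₂² − (1/2)(1 + w₁²)²` is constant in `t`. -/
theorem stmt6 (w1 w2 : ℝ → ℝ)
    (hflow1 : ∀ t : ℝ,
      HasDerivAt w1
        ((w2 t * Real.sqrt (1 + w1 t ^ 2) - w2 t ^ 2 * w1 t) / (1 + w1 t ^ 2) ^ 2) t)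
    (hflow2 : ∀ t : ℝ,
      HasDerivAt w2
        ((w1 t * Real.sqrt (1 + w1 t ^ 2) - w2 t * w1 t ^ 2) / (1 + w1 t ^ 2)) t) :
    ∀ t : ℝ,
      w2 t ^ 2 - (1 / 2) * (1 + w1 t ^ 2) ^ 2 =
        w2 0 ^ 2 - (1 / 2) * (1 + w1 0 ^ 2) ^ 2 := by
  set r : ℝ → ℝ := fun t => Real.sqrt (1 + w1 t ^ 2) - w1 t * w2 t
  have h₁ t : HasDerivAt w1 (w2 t * r t / (1 + w1 t ^ 2) ^ 2) t :=
    (hflow1 t).congr_deriv (by ring)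
  have h₂ t : HasDerivAt w2 (w1 t * r t / (1 + w1 t ^ 2)) t :=
    (hflow2 t).congr_deriv (by ring)
  exact fun t => conservedQuantity_eq_of_flow h₁ h₂ t 0
end

section
/- Along any solution t ↦ W(t) = (W_1(t), …, W_N(t)) of the overparameterized gradient flow: (i) for all indices 1 ≤ i, j ≤ N, the difference of squared Frobenius norms ‖W_i(t)‖_F² − ‖W_j(t)‖_F² is constant in t (equal to a constant c_{ij} determined by the initialization); and (ii) for each i there exist constants a_i ≥ 0 and b_i ≥ 0, depending only on the initialization, such that ‖W_i(t)‖_F ≤ a_i σ_max(W_N(t)) + b_i for all t, where σ_max denotes the largest singular value (operator 2-norm). -/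
open Matrix

noncomputable section

/-- Largest singular value (operator 2-norm) of a matrix. -/
def sigmaMax {a b : ℕ} (A : Mat a b) : ℝ :=
  ‖LinearMap.toContinuousLinearMap (Matrix.toEuclideanLin A)‖

/-! Along the flow, `d/dt ‖W_i‖_F² = -2 ⟨W_i, Aᵢᵀ ∇f(𝐖) Bᵢᵀ⟩_F = -2 ⟨Aᵢ W_i Bᵢ, ∇f(𝐖)⟩_F
= -2 ⟨𝐖, ∇f(𝐖)⟩_F`, where `Aᵢ` and `Bᵢ` are the products of the layers above and below `i`.
This rate does not depend on `i`, so all differences `‖W_i‖_F² - ‖W_j‖_F²` are conserved.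
In particular `‖W_i‖_F² ≤ ‖W_N‖_F² + c⁺` with `c` fixed by the initialization, and
`‖W_N‖_F ≤ √k σ_max(W_N)` because each of its `k` columns has norm at most `σ_max(W_N)`. -/

section LayerProducts

variable {d : ℕ → ℕ} (W : (i : ℕ) → Mat (d (i + 1)) (d i))

lemma mul_mcast_of_eq_s8 {q r c : ℕ} (e : q = r) (h₁ : d q = d r) (h₂ : d (q + 1) = d (r + 1))
    (Y : Mat (d q) c) : W r * mcast h₁ Y = mcast h₂ (W q * Y) := by
  subst e; rfl

/-- `W_{a-1} ⋯ W_0`, with its row dimension read as `d a` rather than `d (0 + a)`. -/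
def prefixProd (a : ℕ) : Mat (d a) (d 0) :=
  mcast (congrArg d (Nat.zero_add a)) (layerProd W 0 a)

lemma prefixProd_succ (a : ℕ) : prefixProd W (a + 1) = W a * prefixProd W a :=
  (mul_mcast_of_eq_s8 W (Nat.zero_add a) _ _ _).symm

lemma layerProd_mul_prefixProd (a m : ℕ) :
    layerProd W a m * prefixProd W a = prefixProd W (a + m) := by
  induction m with
  | zero => exact Matrix.one_mul _
  | succ m ih =>
    change W (a + m) * layerProd W a m * prefixProd W a = prefixProd W (a + m + 1)
    rw [Matrix.mul_assoc, ih, prefixProd_succ]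

lemma mcast_layerProd_mul_mul_prefixProd {N i m : ℕ} (hN : N = i + 1 + m)
    (h : d (i + 1 + m) = d N) :
    mcast h (layerProd W (i + 1) m) * W i * prefixProd W i = fullProd N W := by
  subst hN
  rw [Matrix.mul_assoc, ← prefixProd_succ]
  exact layerProd_mul_prefixProd W (i + 1) m

end LayerProducts

section Frobenius

lemma frobInner_eq_trace {a b : ℕ} (X Y : Mat a b) : frobInner X Y = (Xᵀ * Y).trace := by
  simp only [frobInner, Matrix.trace, Matrix.diag_apply, Matrix.mul_apply,
    Matrix.transpose_apply]
  exact Finset.sum_comm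

lemma frobInner_transpose_mul_mul {p q r s : ℕ} (X : Mat p q) (A : Mat r p) (B : Mat q s)
    (G : Mat r s) : frobInner X (Aᵀ * G * Bᵀ) = frobInner (A * X * B) G := by
  rw [frobInner_eq_trace, frobInner_eq_trace, Matrix.transpose_mul, Matrix.transpose_mul,
    Matrix.mul_assoc (Bᵀ) _ G, Matrix.trace_mul_comm (Bᵀ)]
  simp only [Matrix.mul_assoc]

lemma frobInner_neg_right {a b : ℕ} (A B : Mat a b) : frobInner A (-B) = -frobInner A B := by
  simp [frobInner]

lemma frobInner_self_nonneg {a b : ℕ} (A : Mat a b) : 0 ≤ frobInner A A :=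
  Finset.sum_nonneg fun _ _ => Finset.sum_nonneg fun _ _ => mul_self_nonneg _

lemma frobNorm_sq {a b : ℕ} (A : Mat a b) : frobNorm A ^ 2 = frobInner A A :=
  Real.sq_sqrt (frobInner_self_nonneg A)

lemma hasDerivAt_frobInner_self {a b : ℕ} {A : ℝ → Mat a b} {A' : Mat a b} {t : ℝ}
    (hA : ∀ i j, HasDerivAt (fun s => A s i j) (A' i j) t) :
    HasDerivAt (fun s => frobInner (A s) (A s)) (2 * frobInner (A t) A') t := by
  have h : HasDerivAt (fun s => frobInner (A s) (A s))
      (∑ i, ∑ j, (A' i j * A t i j + A t i j * A' i j)) t :=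
    HasDerivAt.fun_sum fun i _ => HasDerivAt.fun_sum fun j _ => (hA i j).fun_mul (hA i j)
  convert h using 1
  simp only [frobInner, Finset.mul_sum]
  exact Finset.sum_congr rfl fun i _ => Finset.sum_congr rfl fun j _ => by ring

lemma sum_sq_col_le_sigmaMax_sq {a b : ℕ} (A : Mat a b) (j : Fin b) :
    ∑ i, A i j ^ 2 ≤ sigmaMax A ^ 2 := by
  set T := LinearMap.toContinuousLinearMap (Matrix.toEuclideanLin A)
  have hcol : ∑ i, A i j ^ 2 = ‖T (EuclideanSpace.single j 1)‖ ^ 2 := by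
    rw [EuclideanSpace.norm_sq_eq]
    refine Finset.sum_congr rfl fun i _ => ?_
    simp [T, Matrix.toLpLin_apply, Matrix.mulVec_single]
  have hle : ‖T (EuclideanSpace.single j 1)‖ ≤ sigmaMax A :=
    calc ‖T (EuclideanSpace.single j 1)‖ ≤ ‖T‖ * ‖EuclideanSpace.single j (1 : ℝ)‖ :=
          T.le_opNorm _
      _ = sigmaMax A := by rw [PiLp.norm_single, norm_one, mul_one]; rfl
  rw [hcol]
  exact pow_le_pow_left₀ (norm_nonneg _) hle 2

lemma frobNorm_le_sqrt_mul_sigmaMax {a b : ℕ} (A : Mat a b) :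
    frobNorm A ≤ √b * sigmaMax A := by
  have hsq : frobInner A A ≤ b * sigmaMax A ^ 2 :=
    calc frobInner A A = ∑ j, ∑ i, A i j ^ 2 := by
          simp only [frobInner, ← sq]; exact Finset.sum_comm
      _ ≤ ∑ _j : Fin b, sigmaMax A ^ 2 :=
          Finset.sum_le_sum fun j _ => sum_sq_col_le_sigmaMax_sq A j
      _ = b * sigmaMax A ^ 2 := by simp
  calc frobNorm A ≤ √(b * sigmaMax A ^ 2) := Real.sqrt_le_sqrt hsq
    _ = √b * sigmaMax A := by
        rw [Real.sqrt_mul b.cast_nonneg, Real.sqrt_sq (show 0 ≤ sigmaMax A from norm_nonneg _)]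

end Frobenius

lemma le_add_sqrt_max_of_sq_sub_sq_eq {x y c : ℝ} (hy : 0 ≤ y) (h : x ^ 2 - y ^ 2 = c) :
    x ≤ y + √(max c 0) := by
  have hs := Real.sq_sqrt (le_max_right c 0)
  have hc := le_max_left c 0
  exact le_of_sq_le_sq (by nlinarith [Real.sqrt_nonneg (max c 0)])
    (add_nonneg hy (Real.sqrt_nonneg _))

section Flow

variable {d : ℕ → ℕ} {N : ℕ} {gradf : Mat (d N) (d 0) → Mat (d N) (d 0)}

lemma frobInner_gradTerm (W : (i : ℕ) → Mat (d (i + 1)) (d i)) (i : ℕ) (hi : i < N) :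
    frobInner (W i) (gradTerm N gradf W i hi) =
      frobInner (fullProd N W) (gradf (fullProd N W)) := by
  rw [gradTerm, frobInner_transpose_mul_mul]
  exact congrArg (frobInner · _) (mcast_layerProd_mul_mul_prefixProd W (by omega) _)

variable {W : ℝ → (i : ℕ) → Mat (d (i + 1)) (d i)}

lemma IsOvpFlowAt.hasDerivAt_frobNorm_sq {t : ℝ} (hflow : IsOvpFlowAt N gradf W t) (i : Fin N) :
    HasDerivAt (fun s => frobNorm (W s i) ^ 2)
      (-2 * frobInner (fullProd N (W t)) (gradf (fullProd N (W t)))) t := by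
  simp only [frobNorm_sq]
  convert hasDerivAt_frobInner_self (hflow i) using 1
  change _ = 2 * frobInner (W t i) (-gradTerm N gradf (W t) i i.isLt)
  rw [frobInner_neg_right, frobInner_gradTerm]
  ring

lemma frobNorm_sq_sub_frobNorm_sq_eq (hflow : ∀ t, IsOvpFlowAt N gradf W t) (i j : Fin N)
    (t : ℝ) :
    frobNorm (W t i) ^ 2 - frobNorm (W t j) ^ 2 = frobNorm (W 0 i) ^ 2 - frobNorm (W 0 j) ^ 2 := by
  have hderiv (s : ℝ) : HasDerivAt (fun u => frobNorm (W u i) ^ 2 - frobNorm (W u j) ^ 2) 0 s := by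
    have h := ((hflow s).hasDerivAt_frobNorm_sq i).sub ((hflow s).hasDerivAt_frobNorm_sq j)
    rwa [sub_self] at h
  exact is_const_of_deriv_eq_zero (fun s => (hderiv s).differentiableAt)
    (fun s => (hderiv s).deriv) t 0

end Flow

theorem stmt8_general {N : ℕ} (d : ℕ → ℕ)
    (gradf : Mat (d N) (d 0) → Mat (d N) (d 0))
    (W : ℝ → (i : ℕ) → Mat (d (i + 1)) (d i))
    (hflow : ∀ t : ℝ, IsOvpFlowAt N gradf W t) :
    (∀ i j : Fin N, ∀ t : ℝ,
        frobNorm (W t i.val) ^ 2 - frobNorm (W t j.val) ^ 2 =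
          frobNorm (W 0 i.val) ^ 2 - frobNorm (W 0 j.val) ^ 2) ∧
      ∀ i : Fin N, ∃ a b : ℝ, 0 ≤ a ∧ 0 ≤ b ∧
        ∀ t : ℝ, frobNorm (W t i.val) ≤ a * sigmaMax (W t (N - 1)) + b := by
  refine ⟨frobNorm_sq_sub_frobNorm_sq_eq hflow, fun i => ?_⟩
  let last : Fin N := ⟨N - 1, by have := i.isLt; omega⟩
  refine ⟨√(d (N - 1)), √(max (frobNorm (W 0 i) ^ 2 - frobNorm (W 0 last) ^ 2) 0),
    Real.sqrt_nonneg _, Real.sqrt_nonneg _, fun t => ?_⟩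
  calc frobNorm (W t i) ≤ frobNorm (W t last) + _ :=
        le_add_sqrt_max_of_sq_sub_sq_eq (Real.sqrt_nonneg _)
          (frobNorm_sq_sub_frobNorm_sq_eq hflow i last t)
    _ ≤ _ := by gcongr; exact frobNorm_le_sqrt_mul_sigmaMax _

/-- Along any solution of the overparameterized gradient flow:
(i) for all layers `i, j`, the difference `‖W_i(t)‖_F² − ‖W_j(t)‖_F²` is constant in `t`
(equal to its value at the initialization); and (ii) for each layer `i` there are constants
`a_i, b_i ≥ 0`, depending only on the initialization, with
`‖W_i(t)‖_F ≤ a_i σ_max(W_N(t)) + b_i` for all `t` (here `W_N` is the last layer, 0-indexed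
`N-1`). -/
theorem stmt8 {n k N : ℕ} (hn : 1 ≤ n) (hk : n < k) (hN : 2 ≤ N)
    (d : ℕ → ℕ) (hd0 : d 0 = n) (hdN : d N = n) (hdmid : ∀ i, 0 < i → i < N → d i = k)
    (f : Mat (d N) (d 0) → ℝ) (gradf : Mat (d N) (d 0) → Mat (d N) (d 0))
    (hgradf : IsGradientOf f gradf)
    (W : ℝ → (i : ℕ) → Mat (d (i + 1)) (d i))
    (hflow : ∀ t : ℝ, IsOvpFlowAt N gradf W t) :
    (∀ i j : Fin N, ∀ t : ℝ,
        frobNorm (W t i.val) ^ 2 - frobNorm (W t j.val) ^ 2 =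
          frobNorm (W 0 i.val) ^ 2 - frobNorm (W 0 j.val) ^ 2) ∧
      ∀ i : Fin N, ∃ a b : ℝ, 0 ≤ a ∧ 0 ≤ b ∧
        ∀ t : ℝ, frobNorm (W t i.val) ≤ a * sigmaMax (W t (N - 1)) + b :=
  stmt8_general d gradf W hflow
end
end

section
/- Along any solution t ↦ (w_1(t), w_2(t)) of the vector overparameterized gradient flow, the quantity D(t) := (‖w_1(t)‖² + ‖w_2(t)‖²)² − 4 ⟨w_2(t), w_1(t)⟩² is constant in t, and D(t) ≥ 0 for all t. -/
/-!
With `a = ‖w₁‖²`, `b = ‖w₂‖²`, `p = ⟪w₂, w₁⟫`, any flow `ẇ₁ = c w₂`, `ẇ₂ = c w₁` (whatever the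
scalar coefficient `c(t)`) gives `ȧ = ḃ = 2cp` and `ṗ = c (a + b)`, so the derivative of
`(a + b)² − 4p²` is `2 (a + b) ⋅ 4cp − 8p ⋅ c (a + b) = 0`. Nonnegativity is Cauchy–Schwarz:
`p² ≤ ab`, hence `(a + b)² − 4p² ≥ (a − b)² ≥ 0`.
-/

open scoped RealInnerProductSpace

noncomputable section

section

variable {E : Type*} [NormedAddCommGroup E] [InnerProductSpace ℝ E]

def balanceDiscriminant (x y : E) : ℝ :=
  (‖x‖ ^ 2 + ‖y‖ ^ 2) ^ 2 - 4 * ⟪y, x⟫ ^ 2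

theorem balanceDiscriminant_nonneg (x y : E) : 0 ≤ balanceDiscriminant x y := by
  have hcs : ⟪y, x⟫ ^ 2 ≤ ‖x‖ ^ 2 * ‖y‖ ^ 2 := by
    rw [← mul_pow, ← sq_abs, mul_comm]
    exact pow_le_pow_left₀ (abs_nonneg _) (abs_real_inner_le_norm y x) 2
  unfold balanceDiscriminant
  nlinarith [sq_nonneg (‖x‖ ^ 2 - ‖y‖ ^ 2)]

theorem hasDerivAt_balanceDiscriminant {w1 w2 : ℝ → E} {c t : ℝ}
    (h1 : HasDerivAt w1 (c • w2 t) t) (h2 : HasDerivAt w2 (c • w1 t) t) :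
    HasDerivAt (fun s => balanceDiscriminant (w1 s) (w2 s)) 0 t := by
  have hD := ((h1.norm_sq.add h2.norm_sq).pow 2).sub ((h2.inner ℝ h1).pow 2 |>.const_mul 4)
  refine hD.congr_deriv ?_
  simp only [real_inner_smul_left, real_inner_smul_right, Pi.add_apply, Nat.cast_ofNat,
    real_inner_comm (w2 t) (w1 t), real_inner_self_eq_norm_sq]
  ring

theorem balanceDiscriminant_eq_of_hasDerivAt {w1 w2 : ℝ → E} {c : ℝ → ℝ}
    (h1 : ∀ t, HasDerivAt w1 (c t • w2 t) t) (h2 : ∀ t, HasDerivAt w2 (c t • w1 t) t)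
    (t s : ℝ) : balanceDiscriminant (w1 t) (w2 t) = balanceDiscriminant (w1 s) (w2 s) :=
  is_const_of_deriv_eq_zero
    (fun x => (hasDerivAt_balanceDiscriminant (h1 x) (h2 x)).differentiableAt)
    (fun x => (hasDerivAt_balanceDiscriminant (h1 x) (h2 x)).deriv) t s

end

theorem stmt13_general {k : ℕ} (f : ℝ → ℝ)
    (w1 w2 : ℝ → EVec k)
    (hflow : ∀ t : ℝ, IsVecFlowAt f w1 w2 t) :
    ∀ t : ℝ,
      (‖w1 t‖ ^ 2 + ‖w2 t‖ ^ 2) ^ 2 - 4 * ⟪w2 t, w1 t⟫ ^ 2 =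
        (‖w1 0‖ ^ 2 + ‖w2 0‖ ^ 2) ^ 2 - 4 * ⟪w2 0, w1 0⟫ ^ 2 ∧
      0 ≤ (‖w1 t‖ ^ 2 + ‖w2 t‖ ^ 2) ^ 2 - 4 * ⟪w2 t, w1 t⟫ ^ 2 := fun t =>
  ⟨balanceDiscriminant_eq_of_hasDerivAt (fun s => (hflow s).1) (fun s => (hflow s).2) t 0,
    balanceDiscriminant_nonneg (w1 t) (w2 t)⟩

/-- Along any solution of the vector overparameterized gradient flow, the
quantity `D(t) = (‖w₁(t)‖² + ‖w₂(t)‖²)² − 4 ⟪w₂(t), w₁(t)⟫²` is constant in `t` and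
nonnegative. -/
theorem stmt13 {k : ℕ} (hk : 1 ≤ k) (f : ℝ → ℝ)
    (w1 w2 : ℝ → EVec k)
    (hflow : ∀ t : ℝ, IsVecFlowAt f w1 w2 t) :
    ∀ t : ℝ,
      (‖w1 t‖ ^ 2 + ‖w2 t‖ ^ 2) ^ 2 - 4 * ⟪w2 t, w1 t⟫ ^ 2 =
        (‖w1 0‖ ^ 2 + ‖w2 0‖ ^ 2) ^ 2 - 4 * ⟪w2 0, w1 0⟫ ^ 2 ∧
      0 ≤ (‖w1 t‖ ^ 2 + ‖w2 t‖ ^ 2) ^ 2 - 4 * ⟪w2 t, w1 t⟫ ^ 2 :=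
  stmt13_general f w1 w2 hflow
end
end

section
/- Let s ∈ {−1, +1} and let t ↦ (w_1(t), w_2(t)) be a solution of the vector overparameterized gradient flow on [0, T) with f real analytic. If w_1(0) = s·w_2(0), then w_1(t) = s·w_2(t) for all t ∈ [0, T); that is, the set {(w_1, w_2) : w_1 = s w_2} is forward invariant under the flow. -/
open scoped RealInnerProductSpace

noncomputable section

/-! The difference `u = w₁ - s w₂` solves the linear equation `u̇ = s f'(⟪w₂, w₁⟫) u`, because
`s² = 1`; its coefficient is continuous (`f'` is analytic), so Grönwall's inequality forces
`u ≡ 0` from `u(0) = 0`. -/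

theorem eq_zero_of_hasDerivAt_smul_self_s16 {E : Type*} [NormedAddCommGroup E] [NormedSpace ℝ E]
    {g : ℝ → ℝ} {u : ℝ → E} {a b : ℝ} (hg : ContinuousOn g (Set.Icc a b))
    (hu : ∀ τ ∈ Set.Icc a b, HasDerivAt u (g τ • u τ) τ) (ha : u a = 0) :
    ∀ τ ∈ Set.Icc a b, u τ = 0 := by
  obtain ⟨K, hK⟩ := isCompact_Icc.exists_bound_of_continuousOn hg
  refine eq_zero_of_abs_deriv_le_mul_abs_self_of_eq_zero_right
    (fun τ hτ => (hu τ hτ).continuousAt.continuousWithinAt)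
    (fun τ hτ => (hu τ (Set.Ico_subset_Icc_self hτ)).hasDerivWithinAt) ha (K := K) ?_
  intro τ hτ
  rw [norm_smul]
  exact mul_le_mul_of_nonneg_right (hK τ (Set.Ico_subset_Icc_self hτ)) (norm_nonneg _)

theorem IsVecFlowAt.hasDerivAt_sub_smul_s16 {k : ℕ} {f : ℝ → ℝ} {w1 w2 : ℝ → EVec k} {t s : ℝ}
    (h : IsVecFlowAt f w1 w2 t) (hs : s * s = 1) :
    HasDerivAt (fun τ => w1 τ - s • w2 τ)
      ((s * deriv f ⟪w2 t, w1 t⟫) • (w1 t - s • w2 t)) t := by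
  refine (h.1.sub (h.2.const_smul s)).congr_deriv ?_
  linear_combination (norm := module) hs • (deriv f ⟪w2 t, w1 t⟫ • w2 t)

theorem continuous_deriv_of_analyticAt {𝕜 F : Type*} [NontriviallyNormedField 𝕜]
    [NormedAddCommGroup F] [NormedSpace 𝕜 F] [CompleteSpace F] {f : 𝕜 → F}
    (hf : ∀ x, AnalyticAt 𝕜 f x) : Continuous (deriv f) :=
  continuous_iff_continuousAt.2 fun x => (hf x).deriv.continuousAt

theorem stmt16_general {k : ℕ} (f : ℝ → ℝ)
    (hanalytic : ∀ x : ℝ, AnalyticAt ℝ f x)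
    (s : ℝ) (hs : s = 1 ∨ s = -1)
    (T : EReal)
    (w1 w2 : ℝ → EVec k)
    (hflow : ∀ t : ℝ, 0 ≤ t → (t : EReal) < T → IsVecFlowAt f w1 w2 t)
    (hinit : w1 0 = s • w2 0) :
    ∀ t : ℝ, 0 ≤ t → (t : EReal) < T → w1 t = s • w2 t := by
  intro t ht htT
  have hflow_Icc : ∀ τ ∈ Set.Icc 0 t, IsVecFlowAt f w1 w2 τ := fun τ hτ =>
    hflow τ hτ.1 (lt_of_le_of_lt (EReal.coe_le_coe_iff.2 hτ.2) htT)
  have hs2 : s * s = 1 := by rcases hs with rfl | rfl <;> norm_num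
  have hf' := continuous_deriv_of_analyticAt hanalytic
  have hcoeff : ContinuousOn (fun τ => s * deriv f ⟪w2 τ, w1 τ⟫) (Set.Icc 0 t) :=
    fun τ hτ => (continuousAt_const.mul (hf'.continuousAt.comp
      ((hflow_Icc τ hτ).2.continuousAt.inner (hflow_Icc τ hτ).1.continuousAt))).continuousWithinAt
  have hzero := eq_zero_of_hasDerivAt_smul_self_s16 hcoeff
    (fun τ hτ => (hflow_Icc τ hτ).hasDerivAt_sub_smul_s16 hs2) (by simp [hinit])
  exact sub_eq_zero.1 (hzero t ⟨ht, le_rfl⟩)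

/-- For `s ∈ {−1, +1}` and real analytic `f`, the set `{w₁ = s w₂}` is
forward invariant under the vector overparameterized gradient flow: if `w₁(0) = s w₂(0)`,
then `w₁(t) = s w₂(t)` for all `t ∈ [0, T)`. -/
theorem stmt16 {k : ℕ} (hk : 1 ≤ k) (f : ℝ → ℝ)
    (hanalytic : ∀ x : ℝ, AnalyticAt ℝ f x)
    (s : ℝ) (hs : s = 1 ∨ s = -1)
    (T : EReal) (hT : 0 < T)
    (w1 w2 : ℝ → EVec k)
    (hflow : ∀ t : ℝ, 0 ≤ t → (t : EReal) < T → IsVecFlowAt f w1 w2 t)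
    (hinit : w1 0 = s • w2 0) :
    ∀ t : ℝ, 0 ≤ t → (t : EReal) < T → w1 t = s • w2 t :=
  stmt16_general f hanalytic s hs T w1 w2 hflow hinit
end
end

section
/- Suppose f : ℝ → ℝ is continuously differentiable, bounded below with attained minimum value f_min, satisfies f(0) > f_min and f'(0) ≠ 0, and there exists a positive-definite function α : [0,∞) → [0,∞) (α(0) = 0 and α(x) > 0 for x > 0) such that |f'(z)| ≥ α(f(z) − f_min) for all z ∈ ℝ. Let s := sign(f'(0)). Then f'(z) ≠ 0 for every z ∈ ℝ with s·z > 0. -/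
/-!
By the Polyak–Łojasiewicz inequality, `f' t ≠ 0` wherever `f t > fmin`. Say `f' 0 > 0` and
suppose `f z ≤ fmin` for some `z > 0`; let `w` be the first such point of `[0, z]`. On `[0, w)`
the derivative never vanishes, so by Darboux's theorem it keeps the sign of `f' 0`, and `f` is
strictly increasing on `[0, w]`: then `f w > f 0 > fmin`, a contradiction. Hence `f > fmin` on
`[0, ∞)`, and there `f'` does not vanish. The case `f' 0 < 0` follows by reflecting `f`.
-/

open Set

lemma deriv_pos_of_forall_ne_zero {f : ℝ → ℝ} {s : Set ℝ} (hs : Convex ℝ s)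
    (hf : ∀ x ∈ s, DifferentiableAt ℝ f x) (hne : ∀ x ∈ s, deriv f x ≠ 0) {a : ℝ} (ha : a ∈ s)
    (hpos : 0 < deriv f a) : ∀ x ∈ s, 0 < deriv f x :=
  (hasDerivWithinAt_forall_lt_or_forall_gt_of_forall_ne hs
    (fun x hx => (hf x hx).hasDerivAt.hasDerivWithinAt) hne).resolve_left
    fun hneg => (hneg a ha).not_gt hpos

lemma strictMonoOn_Icc_of_deriv_ne_zero {f : ℝ → ℝ} (hf : Differentiable ℝ f) {a b : ℝ}
    (hab : a < b) (hne : ∀ x ∈ Ico a b, deriv f x ≠ 0) (hpos : 0 < deriv f a) :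
    StrictMonoOn f (Icc a b) := by
  have hderiv := deriv_pos_of_forall_ne_zero (convex_Ico a b) (fun x _ => hf x) hne
    (left_mem_Ico.2 hab) hpos
  refine strictMonoOn_of_deriv_pos (convex_Icc a b) hf.continuous.continuousOn fun x hx => ?_
  rw [interior_Icc] at hx
  exact hderiv x (Ioo_subset_Ico_self hx)

lemma lt_of_le_of_deriv_pos {f : ℝ → ℝ} {c a z : ℝ} (hf : Differentiable ℝ f)
    (hcrit : ∀ t, c < f t → deriv f t ≠ 0) (ha : c < f a) (hda : 0 < deriv f a) (hz : a ≤ z) :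
    c < f z := by
  by_contra! hfz
  obtain ⟨w, ⟨⟨haw, hwz⟩, hfw⟩, hfirst⟩ :=
    (isCompact_Icc.inter_right (isClosed_le hf.continuous continuous_const)).exists_isLeast
      (⟨z, ⟨hz, le_rfl⟩, hfz⟩ : (Icc a z ∩ {t | f t ≤ c}).Nonempty)
  have hbefore : ∀ t ∈ Ico a w, c < f t := fun t ht => by
    by_contra! hft
    exact ht.2.not_ge (hfirst ⟨⟨ht.1, ht.2.le.trans hwz⟩, hft⟩)
  have haw' : a < w := haw.lt_of_ne (by rintro rfl; exact hfw.not_gt ha)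
  have hmono := strictMonoOn_Icc_of_deriv_ne_zero hf haw'
    (fun t ht => hcrit t (hbefore t ht)) hda
  exact hfw.not_gt (ha.trans (hmono (left_mem_Icc.2 haw) (right_mem_Icc.2 haw) haw'))

lemma lt_of_ge_of_deriv_neg {f : ℝ → ℝ} {c a z : ℝ} (hf : Differentiable ℝ f)
    (hcrit : ∀ t, c < f t → deriv f t ≠ 0) (ha : c < f a) (hda : deriv f a < 0) (hz : z ≤ a) :
    c < f z := by
  have key := lt_of_le_of_deriv_pos (f := fun x => f (-x)) (a := -a) (z := -z)
    (hf.comp differentiable_neg) (fun t ht => by simpa [deriv_comp_neg] using hcrit (-t) ht)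
    (by simpa using ha) (by simpa [deriv_comp_neg] using hda) (neg_le_neg hz)
  simpa using key

lemma deriv_ne_zero_of_PL {f α : ℝ → ℝ} {fmin z : ℝ} (hαpos : ∀ x : ℝ, 0 < x → 0 < α x)
    (hPL : α (f z - fmin) ≤ |deriv f z|) (hz : fmin < f z) : deriv f z ≠ 0 := by
  intro hdz
  rw [hdz, abs_zero] at hPL
  exact hPL.not_gt (hαpos _ (sub_pos.2 hz))

theorem stmt17_general (f : ℝ → ℝ) (fmin : ℝ)
    (hC1 : ContDiff ℝ 1 f)
    (hf0 : fmin < f 0)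
    (hf'0 : deriv f 0 ≠ 0)
    (α : ℝ → ℝ) (hαpos : ∀ x : ℝ, 0 < x → 0 < α x)
    (hPL : ∀ z : ℝ, α (f z - fmin) ≤ |deriv f z|) :
    ∀ z : ℝ, 0 < Real.sign (deriv f 0) * z → deriv f z ≠ 0 := by
  have hf : Differentiable ℝ f := hC1.differentiable one_ne_zero
  have hcrit : ∀ t, fmin < f t → deriv f t ≠ 0 := fun t => deriv_ne_zero_of_PL hαpos (hPL t)
  intro z hz
  refine hcrit z ?_
  rcases hf'0.lt_or_gt with hneg | hpos
  · rw [Real.sign_of_neg hneg] at hz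
    exact lt_of_ge_of_deriv_neg hf hcrit hf0 hneg (by linarith)
  · rw [Real.sign_of_pos hpos] at hz
    exact lt_of_le_of_deriv_pos hf hcrit hf0 hpos (by linarith)

/-- Suppose `f : ℝ → ℝ` is continuously differentiable, bounded below with
attained minimum value `fmin`, `f 0 > fmin`, `f'(0) ≠ 0`, and satisfies the
positive-definite Polyak–Łojasiewicz inequality `|f'(z)| ≥ α(f z − fmin)` for a
positive-definite `α`. With `s = sign f'(0)`, one has `f'(z) ≠ 0` whenever `s·z > 0`. -/
theorem stmt17 (f : ℝ → ℝ) (fmin : ℝ)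
    (hC1 : ContDiff ℝ 1 f)
    (hfmin_le : ∀ z : ℝ, fmin ≤ f z)
    (hfmin_attained : ∃ z : ℝ, f z = fmin)
    (hf0 : fmin < f 0)
    (hf'0 : deriv f 0 ≠ 0)
    (α : ℝ → ℝ) (hα0 : α 0 = 0) (hαpos : ∀ x : ℝ, 0 < x → 0 < α x)
    (hαnonneg : ∀ x : ℝ, 0 ≤ x → 0 ≤ α x)
    (hPL : ∀ z : ℝ, α (f z - fmin) ≤ |deriv f z|) :
    ∀ z : ℝ, 0 < Real.sign (deriv f 0) * z → deriv f z ≠ 0 :=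
  stmt17_general f fmin hC1 hf0 hf'0 α hαpos hPL
end
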